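/- arXiv:1701.03604 — 10 statements merged into one kernel-verified Lean document; each statement's English description precedes it below -/
import Mathlib

section
/- Let G be a locally compact topological group with Hausdorffication π : G → G̃, and let a ∈ G. Then a is an aperiodic element of G if and only if π(a) is an aperiodic element of G̃. -/
/-- An element of a topological group is *periodic* if the closed subgroup it generates
(the closure of the cyclic subgroup `⟨a⟩`) is compact, and *aperiodic* otherwise. -/
def IsAperiodic {G : Type*} [Group G] [TopologicalSpace G] (a : G) : Prop :=
  ¬ IsCompact (closure (Subgroup.zpowers a : Set G))

/-- The kernel of the Hausdorffication: the closure of the trivial subgroup,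
i.e. the closure of `{e}`. -/
def hausdorffKer (G : Type*) [Group G] [TopologicalSpace G] [IsTopologicalGroup G] : Subgroup G :=
  (⊥ : Subgroup G).topologicalClosure

instance {G : Type*} [Group G] [TopologicalSpace G] [IsTopologicalGroup G] :
    (hausdorffKer G).Normal :=
  Subgroup.is_normal_topologicalClosure _

open Pointwise Topology

/-!
Since every open set `U` of a topological group satisfies `U * closure {1} = U`, the quotient map
onto `G ⧸ N` is inducing whenever `N ⊆ closure {1}`. An inducing surjection identifies the compact
closed subsets of `G` with those of the quotient, and the quotient homomorphism maps `⟨a⟩` onto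
the cyclic subgroup generated by the image of `a`.
-/

theorem Topology.IsInducing.isCompact_closure_iff_of_surjective {X Y : Type*}
    [TopologicalSpace X] [TopologicalSpace Y] {f : X → Y} (hf : IsInducing f)
    (hsurj : Function.Surjective f) (s : Set X) :
    IsCompact (closure s) ↔ IsCompact (closure (f '' s)) := by
  rw [hf.closure_eq_preimage_closure_image, hf.isCompact_preimage_iff]
  simp [hsurj.range_eq]

theorem QuotientGroup.isInducing_coe_of_subset_closure_one {G : Type*} [Group G]
    [TopologicalSpace G] [IsTopologicalGroup G] {N : Subgroup G}
    (hN : (N : Set G) ⊆ closure {1}) : IsInducing ((↑) : G → G ⧸ N) := by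
  refine ⟨le_antisymm (continuous_iff_le_induced.1 continuous_quot_mk) fun U hU => ?_⟩
  refine isOpen_induced_iff.2 ⟨(↑) '' U, isOpenMap_coe U hU, ?_⟩
  rw [preimage_image_mk_eq_mul]
  refine (Set.subset_mul_left U N.one_mem).antisymm' ?_
  calc U * N ⊆ U * closure {1} := Set.mul_subset_mul_left hN
    _ = U := hU.mul_closure_one_eq

theorem isAperiodic_iff_isAperiodic_hausdorffication_general
    {G : Type*} [Group G] [TopologicalSpace G] [IsTopologicalGroup G]
    (a : G) :
    IsAperiodic a ↔ IsAperiodic (QuotientGroup.mk a : G ⧸ hausdorffKer G) := by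
  have hπ : IsInducing ((↑) : G → G ⧸ hausdorffKer G) :=
    QuotientGroup.isInducing_coe_of_subset_closure_one
      (Subgroup.coe_topologicalClosure_bot G).subset
  have himage : ((↑) '' (Subgroup.zpowers a : Set G) : Set (G ⧸ hausdorffKer G)) =
      Subgroup.zpowers (a : G ⧸ hausdorffKer G) :=
    congrArg SetLike.coe ((QuotientGroup.mk' (hausdorffKer G)).map_zpowers a)
  rw [IsAperiodic, IsAperiodic, not_iff_not,
    hπ.isCompact_closure_iff_of_surjective QuotientGroup.mk_surjective, himage]

/-- In a locally compact group `G`, an element `a` is aperiodic if and only if its image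
in the Hausdorffication `G̃ = G / cl({e})` is aperiodic. -/
theorem isAperiodic_iff_isAperiodic_hausdorffication
    {G : Type*} [Group G] [TopologicalSpace G] [IsTopologicalGroup G] [LocallyCompactSpace G]
    (a : G) :
    IsAperiodic a ↔ IsAperiodic (QuotientGroup.mk a : G ⧸ hausdorffKer G) :=
  isAperiodic_iff_isAperiodic_hausdorffication_general a
end

section
/- Let G be a first countable locally compact topological group and let a ∈ G be an aperiodic element. Then for every compact subset K of G there exists N ∈ ℕ such that K ∩ Ka^n = ∅ for all n > N. -/
/-!
If `K ∩ K a^n ≠ ∅` for infinitely many `n`, then `a^n ∈ K⁻¹K` infinitely often, so `a` returns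
infinitely often to the interior `O` of a compact neighbourhood `V` of `K⁻¹K ∪ {1}`. If the return
times to `O` have eventually bounded gaps, all powers `a^n`, `n ≥ 0`, lie in a set `F ∪ V F'` with
`F, F'` finite, so `⟨a⟩` has compact closure. Otherwise take return times `s_g ≥ g` followed by a
gap of length `g`, and a cluster point `z` of `a^(s_g)`: then `z a^t ∉ O` for every `t ≥ 1`, while
`a^(s_k - 2 s_j)` approximates `z⁻¹` for suitable `j` and much larger `k`, so `z a^t ∈ O` for some
`t ≥ 1`.
-/

open Filter Topology Set Pointwise

def BoundedGapsAfter (R : Set ℕ) (r g : ℕ) : Prop :=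
  ∀ u ∈ R, r ≤ u → ∃ v ∈ R, u < v ∧ v ≤ u + g

theorem BoundedGapsAfter.exists_mem_le_le_add {R : Set ℕ} {r g : ℕ}
    (h : BoundedGapsAfter R r g) (hr : r ∈ R) :
    ∀ m, r ≤ m → ∃ u ∈ R, r ≤ u ∧ u ≤ m ∧ m ≤ u + g := by
  intro m hm
  induction m, hm using Nat.le_induction with
  | base => exact ⟨r, hr, le_rfl, le_rfl, by omega⟩
  | succ m hrm ih =>
    obtain ⟨u, huR, hru, hum, hmu⟩ := ih
    by_cases hlt : m + 1 ≤ u + g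
    · exact ⟨u, huR, hru, by omega, hlt⟩
    · obtain ⟨v, hvR, huv, hvu⟩ := h u huR hru
      exact ⟨v, hvR, by omega, by omega, by omega⟩

theorem pow_mem_of_boundedGapsAfter {M : Type*} [Monoid M] {a : M} {S : Set M} {r g : ℕ}
    (hr : a ^ r ∈ S) (hgap : BoundedGapsAfter {n | a ^ n ∈ S} r g) (n : ℕ) :
    a ^ n ∈ (a ^ ·) '' Iic r ∪ S * (a ^ ·) '' Iic g := by
  rcases le_or_gt n r with hnr | hrn
  · exact Or.inl ⟨n, hnr, rfl⟩
  obtain ⟨u, huS, -, hun, hnu⟩ := hgap.exists_mem_le_le_add hr n hrn.le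
  refine Or.inr ⟨a ^ u, huS, a ^ (n - u), ⟨n - u, by simp only [mem_Iic]; omega, rfl⟩, ?_⟩
  show a ^ u * a ^ (n - u) = a ^ n
  rw [← pow_add, Nat.add_sub_cancel' hun]

section Group

variable {G : Type*} [Group G]

theorem mem_inv_mul_of_inter_image_mul_right_nonempty {K : Set G} {g : G}
    (h : (K ∩ (· * g) '' K).Nonempty) : g ∈ K⁻¹ * K := by
  obtain ⟨_, hyK, x, hxK, rfl⟩ := h
  exact ⟨x⁻¹, inv_mem_inv.2 hxK, x * g, hyK, by group⟩

variable [TopologicalSpace G] [IsTopologicalGroup G]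

theorem isCompact_closure_zpowers_of_forall_pow_mem {a : G} {L : Set G} (hL : IsCompact L)
    (h : ∀ n : ℕ, a ^ n ∈ L) : IsCompact (closure (Subgroup.zpowers a : Set G)) := by
  refine (hL.union hL.inv).closure.of_isClosed_subset isClosed_closure (closure_mono ?_)
  rintro _ ⟨k, rfl⟩
  rcases k with n | n
  · exact Or.inl (by simpa using h n)
  · exact Or.inr (by simpa [zpow_negSucc] using h (n + 1))

theorem isCompact_closure_zpowers_of_boundedGapsAfter {a : G} {S V : Set G} (hSV : S ⊆ V)
    (hV : IsCompact V) {r g : ℕ} (hr : a ^ r ∈ S) (hgap : BoundedGapsAfter {n | a ^ n ∈ S} r g) :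
    IsCompact (closure (Subgroup.zpowers a : Set G)) := by
  have hfin : ∀ n, IsCompact ((a ^ ·) '' Iic n : Set G) :=
    fun n => ((finite_Iic n).image _).isCompact
  refine isCompact_closure_zpowers_of_forall_pow_mem ((hfin r).union (hV.mul (hfin g))) ?_
  exact fun n => union_subset_union_right _ (mul_subset_mul_right hSV)
    (pow_mem_of_boundedGapsAfter hr hgap n)

theorem exists_pos_mul_pow_mem_of_mapClusterPt {a z : G} {O : Set G} (hO : IsOpen O)
    (h1 : 1 ∈ O) {s : ℕ → ℕ} (hs : Tendsto s atTop atTop)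
    (hz : MapClusterPt z atTop (fun g => a ^ s g)) : ∃ t, 0 < t ∧ z * a ^ t ∈ O := by
  have hcont : Tendsto (fun x => z * x⁻¹ * x⁻¹ * z) (𝓝 z) (𝓝 1) := by
    simpa using (by fun_prop : Continuous fun x : G => z * x⁻¹ * x⁻¹ * z).tendsto z
  obtain ⟨j, hj⟩ := ((hz.tendsto_comp hcont).frequently (hO.mem_nhds h1)).exists
  set w := z * (a ^ s j)⁻¹ * (a ^ s j)⁻¹
  have hw : ∀ᶠ x in 𝓝 z, w * x ∈ O :=
    (continuous_const.mul continuous_id).continuousAt.preimage_mem_nhds (hO.mem_nhds hj)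
  obtain ⟨k, hk, hjk⟩ := ((hz.frequently hw).and_eventually
    (hs.eventually_gt_atTop (2 * s j))).exists
  have hpow : a ^ s k = a ^ s j * a ^ s j * a ^ (s k - 2 * s j) := by
    rw [← pow_add, ← pow_add]; congr 1; omega
  have hwk : w * a ^ s k = z * a ^ (s k - 2 * s j) := by
    rw [hpow]; simp only [w, mul_assoc, inv_mul_cancel_left]
  exact ⟨s k - 2 * s j, by omega, hwk ▸ hk⟩

theorem exists_boundedGapsAfter_pow_mem {a : G} {O V : Set G} (hO : IsOpen O) (h1 : 1 ∈ O)
    (hOV : O ⊆ V) (hV : IsCompact V) : ∃ g, BoundedGapsAfter {n | a ^ n ∈ O} g g := by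
  by_contra h
  simp only [BoundedGapsAfter, mem_ofPred_eq] at h
  push Not at h
  choose s hsO hs_ge hgap using h
  have hs : Tendsto s atTop atTop := tendsto_atTop_mono hs_ge tendsto_id
  obtain ⟨z, -, hz⟩ := hV.exists_mapClusterPt_of_frequently (l := atTop)
    (Frequently.of_forall fun g => hOV (hsO g))
  obtain ⟨t, ht, hzt⟩ := exists_pos_mul_pow_mem_of_mapClusterPt hO h1 hs hz
  have hnhds : ∀ᶠ x in 𝓝 z, x * a ^ t ∈ O :=
    (continuous_id.mul continuous_const).continuousAt.preimage_mem_nhds (hO.mem_nhds hzt)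
  obtain ⟨g, hg, htg⟩ := ((hz.frequently hnhds).and_eventually (eventually_ge_atTop t)).exists
  have := hgap g (s g + t) (by rwa [pow_add]) (by omega)
  omega

end Group

theorem runaway_of_isAperiodic_general
    {G : Type*} [Group G] [TopologicalSpace G] [IsTopologicalGroup G]
    [LocallyCompactSpace G]
    (a : G) (ha : IsAperiodic a) :
    ∀ K : Set G, IsCompact K → ∃ N : ℕ, ∀ n : ℕ, N < n →
      K ∩ ((fun x => x * a ^ n) '' K) = ∅ := by
  intro K hK
  by_contra! hK_returns
  obtain ⟨V, hV, hKV⟩ := exists_compact_superset ((hK.inv.mul hK).insert 1)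
  have hreturns : ∀ N : ℕ, ∃ n, N < n ∧ a ^ n ∈ interior V := fun N =>
    let ⟨n, hNn, hn⟩ := hK_returns N
    ⟨n, hNn, hKV (mem_insert_of_mem _ (mem_inv_mul_of_inter_image_mul_right_nonempty hn))⟩
  obtain ⟨g, hgap⟩ := exists_boundedGapsAfter_pow_mem (a := a) isOpen_interior
    (hKV (mem_insert _ _)) interior_subset hV
  obtain ⟨r, hgr, hr⟩ := hreturns g
  exact ha (isCompact_closure_zpowers_of_boundedGapsAfter interior_subset hV hr
    fun u hu hru => hgap u hu (by omega))

/-- If `a` is an aperiodic element of a first countable locally compact group `G`, then for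
every compact subset `K` of `G` there is `N` such that `K ∩ K a^n = ∅` for all `n > N`. -/
theorem runaway_of_isAperiodic
    {G : Type*} [Group G] [TopologicalSpace G] [IsTopologicalGroup G]
    [FirstCountableTopology G] [LocallyCompactSpace G]
    (a : G) (ha : IsAperiodic a) :
    ∀ K : Set G, IsCompact K → ∃ N : ℕ, ∀ n : ℕ, N < n →
      K ∩ ((fun x => x * a ^ n) '' K) = ∅ :=
  runaway_of_isAperiodic_general a ha
end

section
/- Let G be a first countable locally compact Hausdorff topological group and let a ∈ G be an aperiodic element. Then the closed subgroup G(a) generated by a, with the subspace topology, is topologically isomorphic to the discrete group ℤ of integers; in particular G(a) equals the cyclic subgroup ⟨a⟩, the map n ↦ a^n is injective, and G(a) is discrete. -/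
open Filter Set Topology

section

variable {G : Type*} [Group G]

theorem Subgroup.coe_subset_biUnion_pow_mul_image {H : Subgroup G} {a : G} (haH : a ∈ H)
    {V : Set G} {m : ℕ} (hstep : ∀ y ∈ (H : Set G) ∩ V, ∃ j ≤ m, a ^ (j + 1) * y ∈ V)
    (hreach : ∀ x ∈ H, ∃ n : ℕ, (a ^ n)⁻¹ * x ∈ V) :
    (H : Set G) ⊆ ⋃ n ∈ Finset.range (m + 1), (a ^ n * ·) '' ((H : Set G) ∩ V) := by
  classical
  intro x hx
  have hS := hreach x hx
  set n₀ := Nat.find hS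
  have hn₀ : (a ^ n₀)⁻¹ * x ∈ (H : Set G) ∩ V :=
    ⟨H.mul_mem (H.inv_mem (H.pow_mem haH n₀)) hx, Nat.find_spec hS⟩
  have hn₀m : n₀ ≤ m := by
    by_contra hlt
    obtain ⟨j, hjm, hj⟩ := hstep _ hn₀
    refine Nat.find_min hS (m := n₀ - (j + 1)) (by omega) ?_
    have hsplit : a ^ n₀ = a ^ (n₀ - (j + 1)) * a ^ (j + 1) := by
      rw [← pow_add, Nat.sub_add_cancel (by omega)]
    rw [hsplit] at hj
    simpa [mul_assoc] using hj
  exact mem_biUnion (Finset.mem_range.2 (by omega)) ⟨_, hn₀, mul_inv_cancel_left _ _⟩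

noncomputable def zpowersMulEquivInt {a : G} (ha : Function.Injective (a ^ · : ℤ → G)) :
    Subgroup.zpowers a ≃* Multiplicative ℤ :=
  (MonoidHom.ofInjective (f := zpowersHom G a) ha).symm

variable [TopologicalSpace G]

theorem IsAperiodic.injective_zpow [R1Space G] {a : G} (ha : IsAperiodic a) :
    Function.Injective (a ^ · : ℤ → G) :=
  injective_zpow_iff_not_isOfFinOrder.2 fun hfin => ha hfin.finite_zpowers.isCompact.closure

variable [IsTopologicalGroup G]

theorem MapClusterPt.zpow_atTop_of_mem_closure_zpowers {a x : G}
    (h : MapClusterPt (1 : G) atTop (a ^ · : ℤ → G))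
    (hx : x ∈ closure (Subgroup.zpowers a : Set G)) :
    MapClusterPt x atTop (a ^ · : ℤ → G) := by
  refine closure_minimal ?_ isClosed_setOfPred_clusterPt hx
  rintro _ ⟨m, rfl⟩
  have hshift : MapClusterPt (a ^ m * 1) atTop ((a ^ m * ·) ∘ (a ^ · : ℤ → G)) :=
    h.tendsto_comp ((continuous_const_mul _).tendsto 1)
  refine MapClusterPt.of_comp (φ := (m + ·)) (tendsto_atTop_add_const_left _ m tendsto_id) ?_
  simpa [Function.comp_def, zpow_add] using hshift

theorem MapClusterPt.exists_pow_mem_of_mem_closure_zpowers {a x : G} {W : Set G}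
    (h : MapClusterPt (1 : G) atTop (a ^ · : ℤ → G))
    (hx : x ∈ closure (Subgroup.zpowers a : Set G)) (hW : W ∈ 𝓝 x) :
    ∃ n : ℕ, 0 < n ∧ a ^ n ∈ W := by
  obtain ⟨n, hn, hnW⟩ :=
    ((h.zpow_atTop_of_mem_closure_zpowers hx).frequently hW).forall_exists_of_atTop 1
  lift n to ℕ using by omega
  exact ⟨n, by omega, zpow_natCast a n ▸ hnW⟩

theorem isCompact_closure_zpowers_of_mapClusterPt [LocallyCompactSpace G] {a : G}
    (h : MapClusterPt (1 : G) atTop (a ^ · : ℤ → G)) :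
    IsCompact (closure (Subgroup.zpowers a : Set G)) := by
  set H := (Subgroup.zpowers a).topologicalClosure
  have hH : IsClosed (H : Set G) := (Subgroup.zpowers a).isClosed_topologicalClosure
  rw [← Subgroup.topologicalClosure_coe]
  obtain ⟨K₀, hK₀, hK₀1⟩ := exists_compact_mem_nhds (1 : G)
  set V := interior K₀
  have hV : IsOpen V := isOpen_interior
  have hV1 : (1 : G) ∈ V := mem_interior_iff_mem_nhds.2 hK₀1
  have hK : IsCompact ((H : Set G) ∩ K₀) := hK₀.inter_left hH
  obtain ⟨t, ht⟩ := hK.elim_finite_subcover (fun j : ℕ => (a ^ (j + 1) * ·) ⁻¹' V)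
    (fun j => hV.preimage (continuous_const_mul _)) (by
      intro y hy
      obtain ⟨n, hn, hnV⟩ := h.exists_pow_mem_of_mem_closure_zpowers (H.inv_mem hy.1)
        ((hV.preimage (continuous_mul_const y)).mem_nhds (by simpa using hV1))
      exact mem_iUnion.2 ⟨n - 1, by simpa [Nat.sub_add_cancel hn] using hnV⟩)
  have hstep : ∀ y ∈ (H : Set G) ∩ V, ∃ j ≤ t.sup id, a ^ (j + 1) * y ∈ V := fun y hy => by
    obtain ⟨j, hjt, hj⟩ := mem_iUnion₂.1 (ht ⟨hy.1, interior_subset hy.2⟩)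
    exact ⟨j, Finset.le_sup (f := id) hjt, hj⟩
  have hreach : ∀ x ∈ H, ∃ n : ℕ, (a ^ n)⁻¹ * x ∈ V := fun x hx => by
    obtain ⟨n, -, hn⟩ := h.exists_pow_mem_of_mem_closure_zpowers (W := (·⁻¹ * x) ⁻¹' V) hx
      ((hV.preimage (continuous_inv.mul continuous_const)).mem_nhds (by simpa using hV1))
    exact ⟨n, hn⟩
  have hcover := H.coe_subset_biUnion_pow_mul_image
    ((Subgroup.zpowers a).le_topologicalClosure (Subgroup.mem_zpowers a)) hstep hreach
  refine ((Finset.range (t.sup id + 1)).isCompact_biUnion fun n _ =>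
    hK.image (continuous_const_mul (a ^ n))).of_isClosed_subset hH (hcover.trans ?_)
  exact iUnion₂_mono fun n _ => image_mono (inter_subset_inter_right _ interior_subset)

theorem discreteTopology_zpowers_of_not_mapClusterPt [T1Space G] {a : G}
    (h : ¬ MapClusterPt (1 : G) atTop (a ^ · : ℤ → G)) :
    DiscreteTopology (Subgroup.zpowers a) := by
  obtain ⟨W, hW, hfreq⟩ : ∃ W ∈ 𝓝 (1 : G), ¬ ∃ᶠ n : ℤ in atTop, a ^ n ∈ W := by
    simpa [mapClusterPt_iff_frequently] using h
  obtain ⟨N, hN⟩ := (not_frequently.1 hfreq).exists_forall_of_atTop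
  apply discreteTopology_of_isOpen_singleton_one
  refine isOpen_singleton_of_finite_mem_nhds 1 (s := Subtype.val ⁻¹' (W ∩ W⁻¹)) ?_ ?_
  · exact continuous_subtype_val.continuousAt.preimage_mem_nhds
      (inter_mem hW (inv_mem_nhds_one G hW))
  · refine ((finite_Ioo (-N) N).image
      (fun n => (⟨a ^ n, Subgroup.zpow_mem_zpowers a n⟩ : Subgroup.zpowers a))).subset ?_
    rintro ⟨_, n, rfl⟩ ⟨hn, hn'⟩
    refine ⟨n, ⟨?_, ?_⟩, rfl⟩
    · by_contra
      exact hN (-n) (by omega) (by simpa using hn')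
    · by_contra
      exact hN n (by omega) hn

theorem IsAperiodic.discreteTopology_zpowers [LocallyCompactSpace G] [T1Space G] {a : G}
    (ha : IsAperiodic a) : DiscreteTopology (Subgroup.zpowers a) :=
  discreteTopology_zpowers_of_not_mapClusterPt fun h =>
    ha (isCompact_closure_zpowers_of_mapClusterPt h)

end

theorem closedSubgroupGenerated_topIsomorphic_int_general
    {G : Type*} [Group G] [TopologicalSpace G] [IsTopologicalGroup G]
    [LocallyCompactSpace G] [T2Space G]
    (a : G) (ha : IsAperiodic a) :
    (∃ e : (Subgroup.zpowers a).topologicalClosure ≃* Multiplicative ℤ,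
      Continuous e ∧ Continuous e.symm) ∧
    (Subgroup.zpowers a).topologicalClosure = Subgroup.zpowers a ∧
    Function.Injective (fun n : ℤ => a ^ n) ∧
    DiscreteTopology ((Subgroup.zpowers a).topologicalClosure) := by
  have hinj := ha.injective_zpow
  have hdisc := ha.discreteTopology_zpowers
  have hclosed : (Subgroup.zpowers a).topologicalClosure = Subgroup.zpowers a :=
    SetLike.ext' Subgroup.isClosed_of_discrete.closure_eq
  rw [hclosed]
  exact ⟨⟨zpowersMulEquivInt hinj, continuous_of_discreteTopology,
    continuous_of_discreteTopology⟩, rfl, hinj, hdisc⟩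

/-- If `a` is an aperiodic element of a first countable locally compact Hausdorff group `G`,
then the closed subgroup `G(a)` generated by `a` (with the subspace topology) is
topologically isomorphic to the discrete group `ℤ`; in particular `G(a) = ⟨a⟩`, the map
`n ↦ a ^ n` is injective, and `G(a)` is discrete. -/
theorem closedSubgroupGenerated_topIsomorphic_int
    {G : Type*} [Group G] [TopologicalSpace G] [IsTopologicalGroup G]
    [FirstCountableTopology G] [LocallyCompactSpace G] [T2Space G]
    (a : G) (ha : IsAperiodic a) :
    (∃ e : (Subgroup.zpowers a).topologicalClosure ≃* Multiplicative ℤ,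
      Continuous e ∧ Continuous e.symm) ∧
    (Subgroup.zpowers a).topologicalClosure = Subgroup.zpowers a ∧
    Function.Injective (fun n : ℤ => a ^ n) ∧
    DiscreteTopology ((Subgroup.zpowers a).topologicalClosure) :=
  closedSubgroupGenerated_topIsomorphic_int_general a ha
end

section
/- Let G be a locally compact topological group with Hausdorffication π : G → G̃, let a ∈ G, and let A, B be closed subsets of G. Then (A, B) is a terminal pair of G with respect to a if and only if (π(A), π(B)) is a terminal pair of G̃ with respect to π(a). -/
/-- `(A, B)` is a *terminal pair* with respect to `a` if `A` and `B` are disjoint closed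
subsets such that every compact set is eventually shifted into `A` by positive powers of
`a` and into `B` by negative powers of `a`. -/
def IsTerminalPair {G : Type*} [Group G] [TopologicalSpace G] (a : G) (A B : Set G) : Prop :=
  IsClosed A ∧ IsClosed B ∧ Disjoint A B ∧
    ∀ K : Set G, IsCompact K → ∃ N : ℕ, ∀ n : ℕ, N ≤ n → ∀ x ∈ K,
      x * a ^ n ∈ A ∧ x * a ^ (-(n : ℤ)) ∈ B

/-! A closed set `A` of a topological group satisfies `A * cl({e}) = A`, so it is
the full preimage of its image in `G̃`. For sets that are full preimages under an open quotient
homomorphism, being a terminal pair transfers in both directions: compact sets of `G` map to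
compact sets of `G̃`, and by local compactness every compact set of `G̃` is covered by the image
of a compact set of `G`. -/

theorem IsOpenMap.exists_isCompact_image_superset {X Y : Type*} [TopologicalSpace X]
    [TopologicalSpace Y] [WeaklyLocallyCompactSpace X] {f : X → Y} (hf : IsOpenMap f)
    (hsurj : Function.Surjective f) {L : Set Y} (hL : IsCompact L) :
    ∃ K : Set X, IsCompact K ∧ L ⊆ f '' K := by
  choose C hC hCx using fun x : X => exists_compact_mem_nhds x
  have hcover : L ⊆ ⋃ x, f '' interior (C x) := fun y _ => by
    obtain ⟨x, rfl⟩ := hsurj y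
    exact Set.mem_iUnion.2 ⟨x, Set.mem_image_of_mem f (mem_interior_iff_mem_nhds.2 (hCx x))⟩
  obtain ⟨t, ht⟩ := hL.elim_finite_subcover _ (fun x => hf _ isOpen_interior) hcover
  refine ⟨⋃ x ∈ t, C x, t.isCompact_biUnion fun x _ => hC x, ht.trans ?_⟩
  rw [Set.image_iUnion₂]
  exact Set.iUnion₂_mono fun x _ => Set.image_mono interior_subset

theorem isTerminalPair_preimage_iff {G H : Type*} [Group G] [Group H] [TopologicalSpace G]
    [TopologicalSpace H] [WeaklyLocallyCompactSpace G] {f : G →* H} (hf : IsOpenQuotientMap f)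
    (a : G) (A B : Set H) :
    IsTerminalPair a (f ⁻¹' A) (f ⁻¹' B) ↔ IsTerminalPair (f a) A B := by
  have hmem : ∀ x : G, ∀ n : ℕ, (x * a ^ n ∈ f ⁻¹' A ↔ f x * f a ^ n ∈ A) ∧
      (x * a ^ (-(n : ℤ)) ∈ f ⁻¹' B ↔ f x * f a ^ (-(n : ℤ)) ∈ B) := by
    simp
  unfold IsTerminalPair
  rw [hf.isQuotientMap.isClosed_preimage, hf.isQuotientMap.isClosed_preimage,
    Set.disjoint_preimage_iff hf.surjective]
  refine and_congr_right fun _ => and_congr_right fun _ => and_congr_right fun _ =>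
    ⟨fun hG L hL => ?_, fun hH K hK => ?_⟩
  · obtain ⟨K, hK, hLK⟩ := hf.isOpenMap.exists_isCompact_image_superset hf.surjective hL
    obtain ⟨N, hN⟩ := hG K hK
    refine ⟨N, fun n hn y hy => ?_⟩
    obtain ⟨x, hx, rfl⟩ := hLK hy
    simpa only [hmem] using hN n hn x hx
  · obtain ⟨N, hN⟩ := hH (f '' K) (hK.image hf.continuous)
    exact ⟨N, fun n hn x hx => by simpa only [hmem] using hN n hn (f x) ⟨x, hx, rfl⟩⟩

theorem preimage_image_mk_hausdorffKer {G : Type*} [Group G] [TopologicalSpace G]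
    [IsTopologicalGroup G] {A : Set G} (hA : IsClosed A) :
    (QuotientGroup.mk : G → G ⧸ hausdorffKer G) ⁻¹' (QuotientGroup.mk '' A) = A := by
  rw [QuotientGroup.preimage_image_mk_eq_mul, hausdorffKer, Subgroup.coe_topologicalClosure_bot,
    hA.mul_closure_one_eq]

/-- For closed subsets `A`, `B` of a locally compact group `G`, `(A, B)` is a terminal
pair of `G` with respect to `a` if and only if `(π A, π B)` is a terminal pair of the
Hausdorffication `G̃ = G / cl({e})` with respect to `π a`. -/
theorem isTerminalPair_iff_hausdorffication
    {G : Type*} [Group G] [TopologicalSpace G] [IsTopologicalGroup G] [LocallyCompactSpace G]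
    (a : G) (A B : Set G) (hA : IsClosed A) (hB : IsClosed B) :
    IsTerminalPair a A B ↔
      IsTerminalPair (QuotientGroup.mk a : G ⧸ hausdorffKer G)
        ((QuotientGroup.mk : G → G ⧸ hausdorffKer G) '' A)
        ((QuotientGroup.mk : G → G ⧸ hausdorffKer G) '' B) := by
  have h := isTerminalPair_preimage_iff
    (f := QuotientGroup.mk' (hausdorffKer G)) QuotientGroup.isOpenQuotientMap_mk
    a (QuotientGroup.mk '' A) (QuotientGroup.mk '' B)
  rwa [QuotientGroup.coe_mk', preimage_image_mk_hausdorffKer hA,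
    preimage_image_mk_hausdorffKer hB] at h
end

section
/- Let G be a second countable locally compact Hausdorff topological group, and let d be a metric on G inducing the topology of G that is right-invariant (d(xg, yg) = d(x,y) for all x, y, g ∈ G) and proper (closed bounded sets are compact). Then for a ∈ G the following are equivalent: (1) a is an aperiodic element of G; (2) for all compact subsets K and K' of G, the distance d(Ka^ℓ, K') := inf{d(x,y) : x ∈ Ka^ℓ, y ∈ K'} tends to infinity as ℓ → ∞. -/
/-! A right-invariant metric gives `dist (a ^ m) (a ^ n) = dist (a ^ (m - n)) 1`. If the powers
`a ^ ℓ` stay close to `K'` from `K`, they lie infinitely often in the compact set `K⁻¹ · B · K'`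
(`B` a closed ball), so a cluster point yields arbitrarily large `n` with `a ^ n` close to `1`.
Together with a finite net of the powers in the compact ball of radius `2`, this lets one push the
index of an approximating power down until it is bounded by a fixed `p`, so all of `⟨a⟩` stays in
a bounded, hence relatively compact, set. -/

open Filter Metric Pointwise

lemma exists_natAbs_le_dist_lt {α : Type*} [PseudoMetricSpace α] [ProperSpace α] (u : ℤ → α)
    (c : α) (r : ℝ) {ε : ℝ} (hε : 0 < ε) :
    ∃ N : ℕ, ∀ k, dist (u k) c ≤ r → ∃ j : ℤ, j.natAbs ≤ N ∧ dist (u k) (u j) < ε := by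
  have hs : TotallyBounded (u '' {k | dist (u k) c ≤ r}) :=
    (isCompact_closedBall c r).totallyBounded.subset (by rintro _ ⟨k, hk, rfl⟩; exact hk)
  obtain ⟨T, -, hT, hcover⟩ :=
    Set.exists_subset_image_finite_and.1 (finite_approx_of_totallyBounded hs ε hε)
  obtain ⟨N, hN⟩ := (hT.image Int.natAbs).bddAbove
  refine ⟨N, fun k hk => ?_⟩
  obtain ⟨_, ⟨j, hj, rfl⟩, hkj⟩ := Set.mem_iUnion₂.1 (hcover ⟨k, hk, rfl⟩)
  exact ⟨j, hN ⟨j, hj, rfl⟩, hkj⟩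

section
variable {G : Type*} [Group G] [PseudoMetricSpace G] [IsIsometricSMul Gᵐᵒᵖ G]

lemma dist_zpow_zpow (a : G) (m n : ℤ) : dist (a ^ m) (a ^ n) = dist (a ^ (m - n)) 1 := by
  rw [← dist_mul_right (a ^ (m - n)) 1 (a ^ n), one_mul, ← zpow_add, sub_add_cancel]

lemma frequently_dist_pow_one_lt {B : Set G} (hB : IsCompact B) {a : G}
    (h : ∃ᶠ n : ℕ in atTop, a ^ n ∈ B) {ε : ℝ} (hε : 0 < ε) :
    ∃ᶠ n : ℕ in atTop, dist (a ^ n) 1 < ε := by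
  obtain ⟨x, -, hx⟩ := hB.exists_mapClusterPt_of_frequently h
  have hnear := frequently_atTop.1 <|
    mapClusterPt_iff_frequently.1 hx _ (ball_mem_nhds x (half_pos hε))
  refine frequently_atTop.2 fun N => ?_
  obtain ⟨m, -, hm⟩ := hnear 0
  obtain ⟨n, hn, hn'⟩ := hnear (m + N)
  refine ⟨n - m, by omega, ?_⟩
  calc dist (a ^ (n - m)) 1 = dist (a ^ n) (a ^ m) := by
        rw [← dist_mul_right _ _ (a ^ m), one_mul, pow_sub_mul_pow a (by omega : m ≤ n)]
    _ ≤ dist (a ^ n) x + dist (a ^ m) x := dist_triangle_right _ _ _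
    _ < ε := by rw [mem_ball] at hm hn'; linarith

lemma isBounded_range_zpow [ProperSpace G] {a : G} (h : ∃ᶠ n : ℕ in atTop, dist (a ^ n) 1 < 1) :
    Bornology.IsBounded (Set.range (a ^ · : ℤ → G)) := by
  obtain ⟨N, hN⟩ := exists_natAbs_le_dist_lt (a ^ · : ℤ → G) 1 2 one_pos
  obtain ⟨p, hNp, hp⟩ := frequently_atTop.1 h (N + 1)
  have descent : ∀ n : ℕ, ∀ k m : ℤ, m.natAbs = n → dist (a ^ k) (a ^ m) < 1 →
      ∃ m' : ℤ, m'.natAbs ≤ p ∧ dist (a ^ k) (a ^ m') < 1 := by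
    intro n
    induction n using Nat.strong_induction_on with
    | _ n ih =>
      rintro k m rfl hkm
      by_cases hm : m.natAbs ≤ p
      · exact ⟨m, hm, hkm⟩
      -- Shift by `±p` towards `0`, then use the net to move back within distance `1` of `a ^ k`.
      obtain ⟨q, hq, hqm⟩ : ∃ q : ℤ, dist (a ^ q) 1 < 1 ∧ (m - q).natAbs + p = m.natAbs := by
        rcases le_or_gt 0 m with h0 | h0
        · exact ⟨p, by simpa using hp, by omega⟩
        · refine ⟨-p, ?_, by omega⟩
          rwa [← zero_sub, ← dist_zpow_zpow, zpow_zero, dist_comm, zpow_natCast]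
      have hw : dist (a ^ (k - m + q)) 1 ≤ 2 :=
        calc dist (a ^ (k - m + q)) 1 ≤ dist (a ^ (k - m + q)) (a ^ q) + dist (a ^ q) 1 :=
              dist_triangle _ _ _
          _ = dist (a ^ k) (a ^ m) + dist (a ^ q) 1 := by
              rw [dist_zpow_zpow, dist_zpow_zpow, add_sub_cancel_right]
          _ ≤ 2 := by linarith
      obtain ⟨j, hjN, hj⟩ := hN _ hw
      refine ih _ (by omega) k (m - q + j) rfl ?_
      rw [dist_zpow_zpow] at hj ⊢
      rwa [show k - (m - q + j) = k - m + q - j by ring]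
  refine (((Set.finite_Icc (-(p : ℤ)) p).image (a ^ ·)).isBounded.cthickening (δ := 1)).subset ?_
  rintro _ ⟨k, rfl⟩
  obtain ⟨m, hm, hkm⟩ := descent _ k k rfl (by simp)
  exact mem_cthickening_of_dist_le _ (a ^ m) _ _ ⟨m, ⟨by omega, by omega⟩, rfl⟩ hkm.le

lemma isCompact_closure_zpowers_of_frequently_pow_mem [ProperSpace G] {B : Set G}
    (hB : IsCompact B) {a : G} (h : ∃ᶠ n : ℕ in atTop, a ^ n ∈ B) :
    IsCompact (closure (Subgroup.zpowers a : Set G)) := by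
  rw [Subgroup.coe_zpowers]
  exact (isBounded_range_zpow (frequently_dist_pow_one_lt hB h one_pos)).isCompact_closure

theorem isAperiodic_iff_forall_lt_dist [IsTopologicalGroup G] [ProperSpace G] (a : G) :
    IsAperiodic a ↔ ∀ K K' : Set G, IsCompact K → IsCompact K' → ∀ C : ℝ, ∃ L : ℕ,
      ∀ ℓ : ℕ, L ≤ ℓ → ∀ x ∈ K, ∀ y ∈ K', C < dist (x * a ^ ℓ) y := by
  refine ⟨fun hap K K' hK hK' C => ?_, fun h hcpt => ?_⟩
  · by_contra! hcon
    refine hap (isCompact_closure_zpowers_of_frequently_pow_mem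
      ((hK.inv.mul (isCompact_closedBall 1 C)).mul hK') (frequently_atTop.2 fun L => ?_))
    obtain ⟨ℓ, hL, x, hx, y, hy, hxy⟩ := hcon L
    have hmid : x * a ^ ℓ * y⁻¹ ∈ closedBall 1 C := by
      rwa [mem_closedBall, ← dist_mul_right _ _ y, inv_mul_cancel_right, one_mul]
    refine ⟨ℓ, hL, ?_⟩
    convert Set.mul_mem_mul (Set.mul_mem_mul (Set.inv_mem_inv.2 hx) hmid) hy using 1
    group
  · obtain ⟨L, hL⟩ := h {1} _ isCompact_singleton hcpt 0
    simpa using hL L le_rfl 1 rfl (a ^ L) (subset_closure (Subgroup.npow_mem_zpowers a L))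

end

theorem isAperiodic_iff_dist_tendsto_atTop_general
    {G : Type*} [Group G] [TopologicalSpace G] [IsTopologicalGroup G]
    (d : G → G → ℝ)
    (d_self : ∀ x y : G, d x y = 0 ↔ x = y)
    (d_symm : ∀ x y : G, d x y = d y x)
    (d_triangle : ∀ x y z : G, d x z ≤ d x y + d y z)
    (d_topology : ∀ s : Set G, IsOpen s ↔ ∀ x ∈ s, ∃ ε > 0, {y : G | d x y < ε} ⊆ s)
    (d_rightInvariant : ∀ x y g : G, d (x * g) (y * g) = d x y)
    (d_proper : ∀ s : Set G, IsClosed s → (∃ x : G, ∃ C : ℝ, ∀ y ∈ s, d x y ≤ C) →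
      IsCompact s)
    (a : G) :
    IsAperiodic a ↔
      ∀ K K' : Set G, IsCompact K → IsCompact K' → ∀ C : ℝ, ∃ L : ℕ, ∀ ℓ : ℕ, L ≤ ℓ →
        ∀ x ∈ K, ∀ y ∈ K', C < d (x * a ^ ℓ) y := by
  let _ : MetricSpace G := .ofDistTopology d (fun x => (d_self x x).2 rfl) d_symm d_triangle
    d_topology (fun x y => (d_self x y).1)
  have _ : ProperSpace G :=
    ⟨fun x r => d_proper _ isClosed_closedBall ⟨x, r, fun y hy => (d_symm x y).trans_le hy⟩⟩
  have _ : IsIsometricSMul Gᵐᵒᵖ G :=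
    ⟨fun g => Isometry.of_dist_eq fun x y => d_rightInvariant x y g.unop⟩
  exact isAperiodic_iff_forall_lt_dist a

/-- Let `G` be a second countable locally compact Hausdorff group and `d` a proper
right-invariant metric inducing the topology of `G`.  Then `a` is aperiodic if and only
if `d(K a^ℓ, K') → ∞` as `ℓ → ∞` for all compact sets `K`, `K'`. -/
theorem isAperiodic_iff_dist_tendsto_atTop
    {G : Type*} [Group G] [TopologicalSpace G] [IsTopologicalGroup G]
    [LocallyCompactSpace G] [T2Space G] [SecondCountableTopology G]
    (d : G → G → ℝ)
    (d_self : ∀ x y : G, d x y = 0 ↔ x = y)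
    (d_symm : ∀ x y : G, d x y = d y x)
    (d_triangle : ∀ x y z : G, d x z ≤ d x y + d y z)
    (d_topology : ∀ s : Set G, IsOpen s ↔ ∀ x ∈ s, ∃ ε > 0, {y : G | d x y < ε} ⊆ s)
    (d_rightInvariant : ∀ x y g : G, d (x * g) (y * g) = d x y)
    (d_proper : ∀ s : Set G, IsClosed s → (∃ x : G, ∃ C : ℝ, ∀ y ∈ s, d x y ≤ C) →
      IsCompact s)
    (a : G) :
    IsAperiodic a ↔
      ∀ K K' : Set G, IsCompact K → IsCompact K' → ∀ C : ℝ, ∃ L : ℕ, ∀ ℓ : ℕ, L ≤ ℓ →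
        ∀ x ∈ K, ∀ y ∈ K', C < d (x * a ^ ℓ) y :=
  isAperiodic_iff_dist_tendsto_atTop_general d d_self d_symm d_triangle d_topology d_rightInvariant
    d_proper a
end

section
/- Let G be a second countable locally compact topological group and a ∈ G. The following are equivalent: (1) a is an aperiodic element of G; (2) for every compact subset K of G there exists N ∈ ℕ such that K ∩ Ka^n = ∅ for all n > N; (3) G admits a terminal pair with respect to a. -/
/-!
If the powers `a ^ k` return to a compact set for arbitrarily large `k`, then a cluster point
of them makes `1`, and hence every point of `H = closure ⟨a⟩`, a cluster point of `a ^ k` as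
`k → +∞`. Covering `K = H ∩ V`, for a compact neighbourhood `V` of `1`, by finitely many
translates `a ^ k * interior V` with `1 ≤ k ≤ N`, the compact set `{a ^ 0, …, a ^ N} * K` becomes
stable under left multiplication by `a⁻¹`. It therefore contains all negative powers of `a`,
whose closure is `H`, so `H` is compact. Thus an aperiodic `a` tends to infinity in both
directions, which gives (2) at once, and along a compact exhaustion `(K i)` the sets
`⋃ K i * a ^ n` and `⋃ K i * a ^ (-n)` over `n ≥ N i` form a terminal pair once `N i` is so large
that `a ^ (± n) ∉ (K i)⁻¹ * K i` for `n ≥ N i`: the unions are locally finite, hence closed.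
-/

open Filter Topology Set Pointwise

theorem inv_mul_mem_zpow_Icc_mul {G : Type*} [Group G] {a : G} {K : Set G} {N : ℤ}
    (hK : K ⊆ (a ^ · : ℤ → G) '' Icc 1 N * K) {d : G}
    (hd : d ∈ (a ^ · : ℤ → G) '' Icc 0 N * K) : a⁻¹ * d ∈ (a ^ · : ℤ → G) '' Icc 0 N * K := by
  obtain ⟨_, ⟨j, ⟨hj0, hjN⟩, rfl⟩, v, hv, rfl⟩ := hd
  rcases hj0.eq_or_lt with rfl | hj
  · obtain ⟨_, ⟨k, ⟨hk1, hkN⟩, rfl⟩, w, hw, rfl⟩ := hK hv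
    exact ⟨_, ⟨k - 1, ⟨by omega, by omega⟩, rfl⟩, w, hw, by group⟩
  · exact ⟨_, ⟨j - 1, ⟨by omega, by omega⟩, rfl⟩, v, hv, by group⟩

section Periodic

variable {G : Type*} [Group G] [TopologicalSpace G] {a : G}

theorem isAperiodic_of_forall_exists_inter_mul_pow_eq_empty
    (h : ∀ K : Set G, IsCompact K → ∃ N : ℕ, ∀ n : ℕ, N < n → K ∩ (· * a ^ n) '' K = ∅) :
    IsAperiodic a := fun hH => by
  obtain ⟨N, hN⟩ := h _ hH
  refine nonempty_iff_ne_empty.1 ?_ (hN (N + 1) N.lt_succ_self)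
  exact ⟨1, subset_closure (one_mem _), (a ^ (N + 1))⁻¹,
    subset_closure (inv_mem (pow_mem (Subgroup.mem_zpowers a) _)), inv_mul_cancel _⟩

theorem IsAperiodic.inv (ha : IsAperiodic a) : IsAperiodic a⁻¹ := by
  rwa [IsAperiodic, Subgroup.zpowers_inv]

theorem IsTerminalPair.isAperiodic {A B : Set G} (h : IsTerminalPair a A B) : IsAperiodic a :=
  fun hH => by
  obtain ⟨-, -, hAB, hK⟩ := h
  obtain ⟨N, hN⟩ := hK _ hH
  have hA := (hN N le_rfl _ (subset_closure (Subgroup.zpow_mem_zpowers a (-N)))).1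
  have hB := (hN N le_rfl _ (subset_closure (Subgroup.zpow_mem_zpowers a N))).2
  simp only [zpow_neg, zpow_natCast, inv_mul_cancel, mul_inv_cancel] at hA hB
  exact hAB.ne_of_mem hA hB rfl

end Periodic

section Recurrence

variable {G : Type*} [Group G] [TopologicalSpace G] [IsTopologicalGroup G] {a : G}

theorem mapClusterPt_one_zpow_of_mapClusterPt {c : G}
    (hc : MapClusterPt c atTop (a ^ · : ℤ → G)) : MapClusterPt 1 atTop (a ^ · : ℤ → G) := by
  refine mapClusterPt_iff_frequently.2 fun U hU => frequently_atTop.2 fun M => ?_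
  obtain ⟨V, hV, hVU⟩ := exists_nhds_split_inv hU
  have hcV : (· * c⁻¹) ⁻¹' V ∈ 𝓝 c :=
    (continuous_mul_const c⁻¹).continuousAt.preimage_mem_nhds (by simpa using hV)
  obtain ⟨k₁, -, hk₁⟩ := frequently_atTop.1 (mapClusterPt_iff_frequently.1 hc _ hcV) 0
  obtain ⟨k₂, hk₂, hk₂V⟩ := frequently_atTop.1 (mapClusterPt_iff_frequently.1 hc _ hcV) (M + k₁)
  refine ⟨k₂ - k₁, by omega, ?_⟩
  simpa [div_eq_mul_inv, mul_assoc, zpow_sub] using hVU _ hk₂V _ hk₁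

theorem MapClusterPt.inv_zpow {x : G} (h : MapClusterPt x atTop (a ^ · : ℤ → G)) :
    MapClusterPt x⁻¹ atTop (a⁻¹ ^ · : ℤ → G) := by
  simpa [Function.comp_def, inv_zpow] using h.continuousAt_comp continuous_inv.continuousAt

theorem mapClusterPt_zpow_of_mem_closure (h1 : MapClusterPt 1 atTop (a ^ · : ℤ → G)) {x : G}
    (hx : x ∈ closure (Subgroup.zpowers a : Set G)) : MapClusterPt x atTop (a ^ · : ℤ → G) := by
  refine closure_minimal ?_ isClosed_setOfPred_clusterPt hx
  rintro _ ⟨k, rfl⟩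
  have hk := h1.continuousAt_comp (continuous_const_mul (a ^ k)).continuousAt
  rw [mul_one] at hk
  refine MapClusterPt.of_comp (tendsto_atTop_add_const_left atTop k tendsto_id) ?_
  simpa [Function.comp_def, zpow_add] using hk

theorem exists_subset_zpow_Icc_mul {K W : Set G} (hK : IsCompact K) (hW : IsOpen W)
    (hW1 : (1 : G) ∈ W) (hKa : ∀ x ∈ K, MapClusterPt x atTop (a ^ · : ℤ → G)) :
    ∃ N : ℕ, K ⊆ (a ^ · : ℤ → G) '' Icc 1 N * W := by
  refine hK.elim_directed_cover _ (fun N => hW.mul_left) (fun x hx => ?_) ?_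
  · have hxW : (·⁻¹ * x) ⁻¹' W ∈ 𝓝 x :=
      (continuous_inv.mul continuous_const).continuousAt.preimage_mem_nhds
        (hW.mem_nhds (by simpa using hW1))
    obtain ⟨k, hk, hkW⟩ := frequently_atTop.1 (mapClusterPt_iff_frequently.1 (hKa x hx) _ hxW) 1
    lift k to ℕ using (by omega)
    exact mem_iUnion.2 ⟨k, _, ⟨k, ⟨hk, le_rfl⟩, rfl⟩, _, hkW, mul_inv_cancel_left _ _⟩
  · exact Monotone.directed_le fun M N h =>
      mul_subset_mul_right (image_mono (Icc_subset_Icc_right (by exact_mod_cast h)))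

theorem isCompact_closure_zpowers_of_mapClusterPt_one [LocallyCompactSpace G]
    (h1 : MapClusterPt 1 atTop (a ^ · : ℤ → G)) :
    IsCompact (closure (Subgroup.zpowers a : Set G)) := by
  set H := (Subgroup.zpowers a).topologicalClosure
  obtain ⟨V, hVc, hV1⟩ := exists_compact_mem_nhds (1 : G)
  set K := (H : Set G) ∩ V
  have hKc : IsCompact K := hVc.inter_left (Subgroup.zpowers a).isClosed_topologicalClosure
  obtain ⟨N, hN⟩ := exists_subset_zpow_Icc_mul hKc isOpen_interior
    (mem_interior_iff_mem_nhds.2 hV1) fun x hx => mapClusterPt_zpow_of_mem_closure h1 hx.1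
  have hKN : K ⊆ (a ^ · : ℤ → G) '' Icc 1 N * K := by
    intro v hv
    obtain ⟨_, ⟨k, hk, rfl⟩, w, hw, rfl⟩ := hN hv
    refine ⟨_, ⟨k, hk, rfl⟩, w, ⟨?_, interior_subset hw⟩, rfl⟩
    simpa using H.mul_mem (H.zpow_mem ((Subgroup.zpowers a).le_topologicalClosure
      (Subgroup.mem_zpowers a)) (-k)) hv.1
  set D := (a ^ · : ℤ → G) '' Icc 0 N * K
  have hDc : IsCompact D := ((finite_Icc 0 (N : ℤ)).image _).isCompact.mul hKc
  have hD : ∀ n : ℕ, a⁻¹ ^ n ∈ D := by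
    intro n
    induction n with
    | zero =>
      rw [pow_zero]
      exact ⟨1, ⟨0, ⟨le_rfl, by positivity⟩, zpow_zero a⟩, 1, ⟨H.one_mem, mem_of_mem_nhds hV1⟩,
        mul_one 1⟩
    | succ n ih => rw [pow_succ']; exact inv_mul_mem_zpow_Icc_mul hKN ih
  refine hDc.closure.of_isClosed_subset isClosed_closure fun x hx => ?_
  have hx' := mapClusterPt_zpow_of_mem_closure (by simpa only [inv_one] using h1.inv_zpow)
    (by rwa [Subgroup.zpowers_inv])
  refine hx'.mem_closure_of_mem (s := D) (mem_map.2 <| eventually_atTop.2 ⟨0, fun k hk => ?_⟩)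
  lift k to ℕ using hk
  simpa using hD k

end Recurrence

section Escape

variable {G : Type*} [Group G] [TopologicalSpace G] [IsTopologicalGroup G] [LocallyCompactSpace G]
  {a : G}

theorem IsAperiodic.tendsto_zpow_atTop (ha : IsAperiodic a) :
    Tendsto (a ^ · : ℤ → G) atTop (cocompact G) := by
  by_contra h
  obtain ⟨s, hs, hfreq⟩ := not_tendsto_iff_exists_frequently_notMem.1 h
  obtain ⟨C, hC, hCs⟩ := mem_cocompact.1 hs
  obtain ⟨c, -, hc⟩ := hC.exists_mapClusterPt_of_frequently
    (hfreq.mono fun k hk => not_not.1 fun hkC => hk (hCs hkC))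
  exact ha <| isCompact_closure_zpowers_of_mapClusterPt_one <|
    mapClusterPt_one_zpow_of_mapClusterPt hc

theorem IsAperiodic.tendsto_zpow_atBot (ha : IsAperiodic a) :
    Tendsto (a ^ · : ℤ → G) atBot (cocompact G) := by
  simpa [Function.comp_def] using ha.inv.tendsto_zpow_atTop.comp tendsto_neg_atBot_atTop

theorem IsAperiodic.tendsto_pow_atTop (ha : IsAperiodic a) :
    Tendsto (a ^ · : ℕ → G) atTop (cocompact G) := by
  simpa [Function.comp_def] using ha.tendsto_zpow_atTop.comp tendsto_natCast_atTop_atTop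

theorem IsAperiodic.exists_inter_mul_pow_eq_empty (ha : IsAperiodic a) {K : Set G}
    (hK : IsCompact K) : ∃ N : ℕ, ∀ n : ℕ, N < n → K ∩ (· * a ^ n) '' K = ∅ := by
  obtain ⟨N, hN⟩ :=
    eventually_atTop.1 (ha.tendsto_pow_atTop.eventually (hK.inv.mul hK).compl_mem_cocompact)
  refine ⟨N, fun n hn => eq_empty_iff_forall_notMem.2 ?_⟩
  rintro _ ⟨hx, y, hy, rfl⟩
  exact hN n hn.le ⟨y⁻¹, inv_mem_inv.2 hy, _, hx, by group⟩

end Escape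

namespace CompactExhaustion

variable {G : Type*} [Group G] [TopologicalSpace G] (K : CompactExhaustion G) (N : ℕ → ℕ)
  (e : ℕ → G)

/-- The translates `closure (K i) * e n` for `n ≥ N i`, indexed by `(i, n - N i)`; closures are
taken because compact sets need not be closed in a non-Hausdorff group. -/
def tailTranslates : Set G :=
  ⋃ p : ℕ × ℕ, (· * e (N p.1 + p.2)) '' closure (K p.1)

theorem mul_mem_tailTranslates {i n : ℕ} (hn : N i ≤ n) {x : G} (hx : x ∈ K i) :
    x * e n ∈ K.tailTranslates N e :=
  mem_iUnion.2 ⟨(i, n - N i), x, subset_closure hx, by simp [Nat.add_sub_cancel' hn]⟩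

variable {N e}

theorem locallyFinite_tailTranslates
    (he : ∀ i n, N i ≤ n → e n ∉ (closure (K i))⁻¹ * closure (K i)) :
    LocallyFinite fun p : ℕ × ℕ => (· * e (N p.1 + p.2)) '' closure (K p.1) := by
  intro x
  obtain ⟨j, hj⟩ := K.exists_mem x
  refine ⟨interior (K (j + 1)), isOpen_interior.mem_nhds (K.subset_interior_succ j hj), ?_⟩
  refine ((finite_Iio (j + 1)).prod (finite_Iio (N (j + 1)))).subset ?_
  rintro ⟨i, n⟩ ⟨_, ⟨y, hy, rfl⟩, hyj⟩
  have hmem : ∀ l, i ≤ l → j + 1 ≤ l → e (N i + n) ∈ (closure (K l))⁻¹ * closure (K l) :=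
    fun l hil hjl => ⟨y⁻¹, inv_mem_inv.2 (closure_mono (K.subset hil) hy), _,
      closure_mono (K.subset hjl) (subset_closure (interior_subset hyj)), by group⟩
  have hi : i < j + 1 := by
    by_contra! h
    exact he i _ le_self_add (hmem i le_rfl h)
  refine ⟨hi, mem_Iio.2 ?_⟩
  by_contra! h
  exact he _ _ (h.trans le_add_self) (hmem _ hi.le le_rfl)

theorem isClosed_tailTranslates [ContinuousMul G]
    (he : ∀ i n, N i ≤ n → e n ∉ (closure (K i))⁻¹ * closure (K i)) :
    IsClosed (K.tailTranslates N e) :=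
  (K.locallyFinite_tailTranslates he).isClosed_iUnion fun _ =>
    (Homeomorph.mulRight _).isClosedMap _ isClosed_closure

end CompactExhaustion

theorem IsAperiodic.exists_isTerminalPair {G : Type*} [Group G] [TopologicalSpace G]
    [IsTopologicalGroup G] [LocallyCompactSpace G] [SigmaCompactSpace G] {a : G}
    (ha : IsAperiodic a) : ∃ A B : Set G, IsTerminalPair a A B := by
  let K := CompactExhaustion.choice G
  have hC : ∀ i, IsCompact ((closure (K i))⁻¹ * closure (K i)) := fun i =>
    (K.isCompact i).closure.inv.mul (K.isCompact i).closure
  have hneg : Tendsto (fun n : ℕ => a ^ (-(n : ℤ))) atTop (cocompact G) :=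
    ha.tendsto_zpow_atBot.comp (tendsto_neg_atTop_atBot.comp tendsto_natCast_atTop_atTop)
  choose N hN using fun i => eventually_atTop.1 <|
    (ha.tendsto_pow_atTop.eventually (hC i).compl_mem_cocompact).and
      (hneg.eventually (hC i).compl_mem_cocompact)
  refine ⟨K.tailTranslates N (a ^ ·), K.tailTranslates N fun n => a ^ (-(n : ℤ)),
    K.isClosed_tailTranslates fun i n hn => (hN i n hn).1,
    K.isClosed_tailTranslates fun i n hn => (hN i n hn).2, ?_, fun S hS => ?_⟩
  · refine disjoint_left.2 fun x hA hB => ?_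
    obtain ⟨⟨i, m⟩, y, hy, rfl⟩ := mem_iUnion.1 hA
    obtain ⟨⟨j, n⟩, z, hz, hyz⟩ := mem_iUnion.1 hB
    simp only at hy hz hyz
    have hyz' : y⁻¹ * z = a ^ (N i + m + (N j + n)) := by
      calc y⁻¹ * z = y⁻¹ * (z * a ^ (-((N j + n : ℕ) : ℤ)) * a ^ (N j + n)) := by
            rw [zpow_neg, zpow_natCast, inv_mul_cancel_right]
        _ = a ^ (N i + m + (N j + n)) := by rw [hyz, pow_add]; group
    refine (hN (max i j) _ ?_).1 ⟨y⁻¹, inv_mem_inv.2 (closure_mono (K.subset (le_max_left ..)) hy),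
      z, closure_mono (K.subset (le_max_right ..)) hz, hyz'⟩
    rcases max_choice i j with h | h <;> rw [h] <;> omega
  · obtain ⟨i, hi⟩ := K.exists_superset_of_isCompact hS
    exact ⟨N i, fun n hn x hx =>
      ⟨K.mul_mem_tailTranslates N _ hn (hi hx), K.mul_mem_tailTranslates N _ hn (hi hx)⟩⟩

/-- For a second countable locally compact group `G` and `a ∈ G`, the following are
equivalent: (1) `a` is aperiodic; (2) every compact set `K` satisfies `K ∩ K a^n = ∅` for
all large `n`; (3) `G` admits a terminal pair with respect to `a`. -/
theorem isAperiodic_tfae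
    {G : Type*} [Group G] [TopologicalSpace G] [IsTopologicalGroup G]
    [LocallyCompactSpace G] [SecondCountableTopology G] (a : G) :
    (IsAperiodic a ↔
      ∀ K : Set G, IsCompact K → ∃ N : ℕ, ∀ n : ℕ, N < n →
        K ∩ ((fun x => x * a ^ n) '' K) = ∅) ∧
    (IsAperiodic a ↔ ∃ A B : Set G, IsTerminalPair a A B) :=
  ⟨⟨fun ha _ hK => ha.exists_inter_mul_pow_eq_empty hK,
      isAperiodic_of_forall_exists_inter_mul_pow_eq_empty⟩,
    ⟨IsAperiodic.exists_isTerminalPair, fun ⟨_, _, h⟩ => h.isAperiodic⟩⟩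
end

section
/- Let G = GL(n, ℂ) be the general linear group with its standard topology, and let a ∈ G be a matrix having an eigenvalue λ with |λ| ≠ 1. Then G admits a terminal pair with respect to a. -/
section TerminalPair

variable {G : Type*} [Group G]

lemma map_mul_zpow_eq_add {a : G} {φ : G → ℝ} (hφ : ∀ x, φ (x * a) = φ x + 1)
    (x : G) (k : ℤ) : φ (x * a ^ k) = φ x + k := by
  induction k using Int.induction_on with
  | zero => simp
  | succ k ih =>
    rw [zpow_add_one, ← mul_assoc, hφ, ih]
    push_cast
    ring
  | pred k ih =>
    have h := hφ (x * a ^ (-(k : ℤ) - 1))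
    rw [mul_assoc, ← zpow_add_one, sub_add_cancel, ih] at h
    push_cast at h ⊢
    linarith

theorem isTerminalPair_of_map_mul_eq_add_one [TopologicalSpace G] {a : G} {φ : G → ℝ}
    (hc : Continuous φ) (hφ : ∀ x, φ (x * a) = φ x + 1) :
    IsTerminalPair a {x | 1 ≤ φ x} {x | φ x ≤ -1} := by
  refine ⟨isClosed_le continuous_const hc, isClosed_le hc continuous_const,
    Set.disjoint_left.2 fun x (h₁ : 1 ≤ φ x) (h₂ : φ x ≤ -1) => by linarith, fun K hK => ?_⟩
  obtain ⟨C, hC⟩ := hK.exists_bound_of_continuousOn hc.continuousOn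
  obtain ⟨N, hN⟩ := exists_nat_ge (C + 1)
  refine ⟨N, fun n hn x hx => ?_⟩
  have hφx := abs_le.1 (hC x hx)
  have hnN : (N : ℝ) ≤ n := by exact_mod_cast hn
  constructor
  · show 1 ≤ φ (x * a ^ n)
    rw [← zpow_natCast, map_mul_zpow_eq_add hφ, Int.cast_natCast]
    linarith
  · show φ (x * a ^ (-(n : ℤ))) ≤ -1
    rw [map_mul_zpow_eq_add hφ]
    push_cast
    linarith

end TerminalPair

namespace Matrix.GeneralLinearGroup

variable {ι 𝕜 : Type*} [Fintype ι] [DecidableEq ι]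

lemma mulVec_ne_zero [CommRing 𝕜] (g : GL ι 𝕜) {v : ι → 𝕜} (hv : v ≠ 0) :
    (g : Matrix ι ι 𝕜) *ᵥ v ≠ 0 := by
  intro h
  have hinv : (↑g⁻¹ : Matrix ι ι 𝕜) *ᵥ ((g : Matrix ι ι 𝕜) *ᵥ v) = v := by
    rw [mulVec_mulVec, Units.inv_mul, one_mulVec]
  rw [h, mulVec_zero] at hinv
  exact hv hinv.symm

lemma norm_mul_mulVec_of_mulVec_eq_smul [NormedField 𝕜] {a : GL ι 𝕜} {v : ι → 𝕜} {lam : 𝕜}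
    (hav : (a : Matrix ι ι 𝕜) *ᵥ v = lam • v) (x : GL ι 𝕜) :
    ‖(↑(x * a) : Matrix ι ι 𝕜) *ᵥ v‖ = ‖lam‖ * ‖(x : Matrix ι ι 𝕜) *ᵥ v‖ := by
  rw [Units.val_mul, ← mulVec_mulVec, hav, mulVec_smul, norm_smul]

end Matrix.GeneralLinearGroup

open Matrix Matrix.GeneralLinearGroup in
/-- If `a ∈ GL(n, ℂ)` has an eigenvalue `λ` with `|λ| ≠ 1`, then `GL(n, ℂ)` admits a
terminal pair with respect to `a`. -/
theorem GL_terminalPair_of_eigenvalue_abs_ne_one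
    {n : ℕ} (a : GL (Fin n) ℂ) (lam : ℂ)
    (hlam : ∃ v : Fin n → ℂ, v ≠ 0 ∧ (a : Matrix (Fin n) (Fin n) ℂ).mulVec v = lam • v)
    (habs : ‖lam‖ ≠ 1) :
    ∃ A B : Set (GL (Fin n) ℂ), IsTerminalPair a A B := by
  obtain ⟨v, hv, hav⟩ := hlam
  have hgv (g : GL (Fin n) ℂ) : ‖(g : Matrix (Fin n) (Fin n) ℂ) *ᵥ v‖ ≠ 0 :=
    norm_ne_zero_iff.2 (mulVec_ne_zero g hv)
  have hlam0 : ‖lam‖ ≠ 0 := by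
    have ha := norm_mul_mulVec_of_mulVec_eq_smul hav 1
    rw [one_mul] at ha
    intro h0
    exact hgv a (by rw [ha, h0, zero_mul])
  have hlog : Real.log ‖lam‖ ≠ 0 :=
    Real.log_ne_zero_of_pos_of_ne_one ((norm_nonneg _).lt_of_ne' hlam0) habs
  refine ⟨_, _, isTerminalPair_of_map_mul_eq_add_one
    (φ := fun g : GL (Fin n) ℂ =>
      Real.log ‖(g : Matrix (Fin n) (Fin n) ℂ) *ᵥ v‖ / Real.log ‖lam‖)
    (((Units.continuous_val.matrix_mulVec continuous_const).norm.log hgv).div_const _)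
    fun x => ?_⟩
  rw [norm_mul_mulVec_of_mulVec_eq_smul hav, Real.log_mul hlam0 (hgv x)]
  field_simp
  ring
end

section
/- Let a ∈ GL(n, ℂ). Then a is a periodic element of the topological group GL(n, ℂ) if and only if a is diagonalizable with every eigenvalue of absolute value 1; that is, if and only if there exist P ∈ GL(n, ℂ) and a diagonal matrix D with |D_{ii}| = 1 for all i such that a = P D P^{-1}. -/
/-- An element `a` of a topological group is *periodic* if the closed subgroup it
generates (the closure of the cyclic subgroup `⟨a⟩`) is compact. -/
def IsPeriodic {G : Type*} [Group G] [TopologicalSpace G] (a : G) : Prop :=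
  IsCompact (closure (Subgroup.zpowers a : Set G))

/-!
If the closure of `⟨a⟩` is compact, every orbit `k ↦ aᵏ x` is bounded. Bounded orbits
under `a` and `a⁻¹` put the eigenvalues on the unit circle, and a Jordan block of size two
at a unimodular eigenvalue would make `aᵏ x` grow linearly in `k`; hence generalized
eigenvectors are eigenvectors and `a` is diagonalizable. Conversely, `P diag(d) P⁻¹` is the
image of the point `d` of the compact torus `(S¹)ⁿ` under a continuous homomorphism into
`GL(n, ℂ)`, and continuous homomorphisms into a Hausdorff group preserve periodicity.
-/

open Set Bornology Matrix Module Module.End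

section TopologicalGroup

variable {G H : Type*} [Group G] [TopologicalSpace G] {a : G}

lemma IsPeriodic.inv (h : IsPeriodic a) : IsPeriodic a⁻¹ := by
  rwa [IsPeriodic, Subgroup.zpowers_inv]

lemma isPeriodic_of_compactSpace [CompactSpace G] (a : G) : IsPeriodic a :=
  isClosed_closure.isCompact

lemma IsPeriodic.map [Group H] [TopologicalSpace H] [T2Space H] (h : IsPeriodic a)
    {φ : G →* H} (hφ : Continuous φ) : IsPeriodic (φ a) := by
  have hK : IsCompact (φ '' closure (Subgroup.zpowers a)) := h.image hφ
  refine hK.of_isClosed_subset isClosed_closure (closure_minimal ?_ hK.isClosed)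
  rw [← MonoidHom.map_zpowers, Subgroup.coe_map]
  exact image_mono subset_closure

lemma IsPeriodic.isBounded_range_pow {X : Type*} [PseudoMetricSpace X] (h : IsPeriodic a)
    {f : G → X} (hf : Continuous f) : IsBounded (range fun k : ℕ ↦ f (a ^ k)) :=
  (h.image hf).isBounded.subset <| range_subset_iff.2 fun k ↦
    mem_image_of_mem f (subset_closure (pow_mem (Subgroup.mem_zpowers a) k))

end TopologicalGroup

namespace Module.End

section Field

variable {K V : Type*} [Field K] [AddCommGroup V] [Module K V] {f : End K V} {μ : K}

lemma maxGenEigenspace_eq_eigenspace_of_genEigenspace_two_le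
    (h : f.genEigenspace μ 2 ≤ f.eigenspace μ) : f.maxGenEigenspace μ = f.eigenspace μ := by
  have hker : LinearMap.ker ((f - μ • 1) ^ 1) = LinearMap.ker ((f - μ • 1) ^ 2) := by
    refine le_antisymm ?_ ?_
    · rw [pow_one, sq]
      exact LinearMap.ker_le_ker_comp _ _
    · rw [pow_one, ← eigenspace_def, ← genEigenspace_nat]
      exact h
  refine le_antisymm ?_ ((f.genEigenspace μ).monotone le_top)
  rw [maxGenEigenspace, genEigenspace_top]
  refine iSup_le fun k ↦ ?_
  rw [genEigenspace_nat, eigenspace_def]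
  rcases k with _ | m
  · rw [pow_zero, one_eq_id, LinearMap.ker_id]
    exact bot_le
  · rw [add_comm, ← ker_pow_constant hker m, pow_one]

end Field

section Normed

variable {𝕜 E : Type*} [NormedAddCommGroup E]

lemma HasEigenvector.norm_le_one_of_isBounded [NormedField 𝕜] [NormedSpace 𝕜 E]
    {f : End 𝕜 E} {μ : 𝕜} {x : E} (hx : f.HasEigenvector μ x)
    (hb : IsBounded (range fun k : ℕ ↦ (f ^ k) x)) : ‖μ‖ ≤ 1 := by
  obtain ⟨C, hC⟩ := hb.exists_norm_le
  have hx0 : 0 < ‖x‖ := norm_pos_iff.2 hx.2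
  by_contra! hμ
  obtain ⟨k, hk⟩ := pow_unbounded_of_one_lt (C / ‖x‖) hμ
  have hCk := hC _ (mem_range_self k)
  rw [hx.pow_apply, norm_smul, norm_pow] at hCk
  rw [div_lt_iff₀ hx0] at hk
  linarith

lemma mem_eigenspace_of_mem_genEigenspace_two [RCLike 𝕜] [NormedSpace 𝕜 E] {f : End 𝕜 E}
    {μ : 𝕜} {x : E} (hμ : ‖μ‖ = 1) (hx : x ∈ f.genEigenspace μ 2)
    (hb : IsBounded (range fun k : ℕ ↦ (f ^ k) x)) : x ∈ f.eigenspace μ := by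
  set w := (f - μ • 1) x with hw
  have hfx : f x = μ • x + w := by
    simp only [hw, LinearMap.sub_apply, LinearMap.smul_apply, one_apply, add_sub_cancel]
  have hfw : f w = μ • w := by
    rw [← Nat.cast_ofNat, mem_genEigenspace_nat, LinearMap.mem_ker, sq, mul_apply] at hx
    rwa [LinearMap.sub_apply, LinearMap.smul_apply, one_apply, sub_eq_zero] at hx
  -- the linear growth of a Jordan block: `fᵏ x = μᵏ x + k μᵏ⁻¹ w`, multiplied by `μ`
  have hpow (k : ℕ) : μ • (f ^ k) x = μ ^ (k + 1) • x + ((k : 𝕜) * μ ^ k) • w := by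
    induction k with
    | zero => simp
    | succ k ih =>
      rw [pow_succ', mul_apply, ← map_smul, ih, map_add, map_smul, map_smul, hfx, hfw]
      push_cast
      module
  obtain ⟨C, hC⟩ := hb.exists_norm_le
  have hlin (k : ℕ) : k * ‖w‖ ≤ C + ‖x‖ :=
    calc (k : ℝ) * ‖w‖ = ‖((k : 𝕜) * μ ^ k) • w‖ := by
          rw [norm_smul, norm_mul, norm_pow, hμ, one_pow, mul_one, RCLike.norm_natCast]
      _ = ‖μ • (f ^ k) x - μ ^ (k + 1) • x‖ := by rw [hpow, add_sub_cancel_left]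
      _ ≤ ‖μ • (f ^ k) x‖ + ‖μ ^ (k + 1) • x‖ := norm_sub_le _ _
      _ ≤ C + ‖x‖ := by
          rw [norm_smul, hμ, one_mul, norm_smul, norm_pow, hμ, one_pow, one_mul]
          linarith [hC _ (mem_range_self k)]
  have hw0 : w = 0 := by
    by_contra hw0
    have hw_pos := norm_pos_iff.2 hw0
    obtain ⟨k, hk⟩ := exists_nat_gt ((C + ‖x‖) / ‖w‖)
    rw [div_lt_iff₀ hw_pos] at hk
    linarith [hlin k]
  rwa [eigenspace_def, LinearMap.mem_ker]

end Normed

end Module.End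

theorem Matrix.exists_eq_mul_diagonal_mul_inv_of_iSup_eigenspace_eq_top {K ι : Type*} [Field K]
    [Fintype ι] [DecidableEq ι] {A : Matrix ι ι K}
    (h : ⨆ μ, eigenspace (toLin' A) μ = ⊤) :
    ∃ (P : GL ι K) (d : ι → K), (∀ i, HasEigenvalue (toLin' A) (d i)) ∧
      A = P * diagonal d * (↑P⁻¹ : Matrix ι ι K) := by
  classical
  have hInt : DirectSum.IsInternal (eigenspace (toLin' A)) :=
    (DirectSum.isInternal_submodule_iff_iSupIndep_and_iSup_eq_top _).2
      ⟨eigenspaces_iSupIndep (toLin' A), h⟩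
  let b₀ := hInt.collectedBasis fun μ ↦ finBasis K (eigenspace (toLin' A) μ)
  let e := b₀.indexEquiv (Pi.basisFun K ι)
  let b := b₀.reindex e
  let d : ι → K := fun i ↦ (e.symm i).1
  have hb (i : ι) : HasEigenvector (toLin' A) (d i) (b i) := by
    refine ⟨?_, b.ne_zero i⟩
    rw [Basis.reindex_apply]
    exact hInt.collectedBasis_mem _ (e.symm i)
  let P : GL ι K := ⟨(Pi.basisFun K ι).toMatrix b, b.toMatrix (Pi.basisFun K ι),
    (Pi.basisFun K ι).toMatrix_mul_toMatrix_flip b, b.toMatrix_mul_toMatrix_flip _⟩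
  have hAP : A * P = P * diagonal d := by
    ext i j
    have hP (k : ι) : (P : Matrix ι ι K) k j = b j k := by
      simp only [P, Basis.toMatrix_apply, Pi.basisFun_repr]
    have hAb := congrFun (hb j).apply_eq_smul i
    rw [toLin'_apply, mulVec, dotProduct] at hAb
    rw [mul_diagonal, mul_apply]
    simp only [hP]
    rw [hAb, Pi.smul_apply, smul_eq_mul, mul_comm]
  refine ⟨P, d, fun i ↦ hasEigenvalue_of_hasEigenvector (hb i), ?_⟩
  rw [← hAP, Matrix.mul_assoc, ← Units.val_mul, mul_inv_cancel, Units.val_one, Matrix.mul_one]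

section GeneralLinearGroup

variable {𝕜 ι : Type*} [RCLike 𝕜] [Fintype ι] [DecidableEq ι] {a : GL ι 𝕜}

lemma IsPeriodic.isBounded_range_toLin'_pow (h : IsPeriodic a) (x : ι → 𝕜) :
    IsBounded (range fun k : ℕ ↦ (toLin' (a : Matrix ι ι 𝕜) ^ k) x) := by
  have hc : Continuous fun g : GL ι 𝕜 ↦ (g : Matrix ι ι 𝕜) *ᵥ x :=
    Units.continuous_val.matrix_mulVec continuous_const
  simpa only [Units.val_pow_eq_pow_val, ← toLin'_pow, toLin'_apply] using
    h.isBounded_range_pow hc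

lemma IsPeriodic.norm_eq_one_of_hasEigenvalue (h : IsPeriodic a) {μ : 𝕜}
    (hμ : HasEigenvalue (toLin' (a : Matrix ι ι 𝕜)) μ) : ‖μ‖ = 1 := by
  obtain ⟨x, hx⟩ := hμ.exists_hasEigenvector
  have hax : (a : Matrix ι ι 𝕜) *ᵥ x = μ • x := hx.apply_eq_smul
  have hinv : μ • ((a⁻¹ : GL ι 𝕜) : Matrix ι ι 𝕜) *ᵥ x = x := by
    rw [← mulVec_smul, ← hax, mulVec_mulVec, ← Units.val_mul, inv_mul_cancel, Units.val_one,
      one_mulVec]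
  have hμ0 : μ ≠ 0 := by
    rintro rfl
    exact hx.2 (by rw [← hinv, zero_smul])
  have hx' : HasEigenvector (toLin' ((a⁻¹ : GL ι 𝕜) : Matrix ι ι 𝕜)) μ⁻¹ x :=
    ⟨mem_eigenspace_iff.2 ((eq_inv_smul_iff₀ hμ0).2 hinv), hx.2⟩
  have hle := hx.norm_le_one_of_isBounded (h.isBounded_range_toLin'_pow x)
  have hge := hx'.norm_le_one_of_isBounded (h.inv.isBounded_range_toLin'_pow x)
  rw [norm_inv, inv_le_one₀ (norm_pos_iff.2 hμ0)] at hge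
  exact le_antisymm hle hge

lemma IsPeriodic.genEigenspace_two_le_eigenspace (h : IsPeriodic a) (μ : 𝕜) :
    genEigenspace (toLin' (a : Matrix ι ι 𝕜)) μ 2 ≤
      eigenspace (toLin' (a : Matrix ι ι 𝕜)) μ := by
  intro x hx
  by_cases hμ : HasEigenvalue (toLin' (a : Matrix ι ι 𝕜)) μ
  · exact mem_eigenspace_of_mem_genEigenspace_two (h.norm_eq_one_of_hasEigenvalue hμ) hx
      (h.isBounded_range_toLin'_pow x)
  · have hbot : genEigenspace (toLin' (a : Matrix ι ι 𝕜)) μ 2 = ⊥ := by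
      by_contra hne
      exact hμ ((hasUnifEigenvalue_iff_hasUnifEigenvalue_one two_pos).1 hne)
    rw [hbot, Submodule.mem_bot] at hx
    rw [hx]
    exact zero_mem _

lemma IsPeriodic.iSup_eigenspace_eq_top [IsAlgClosed 𝕜] (h : IsPeriodic a) :
    ⨆ μ, eigenspace (toLin' (a : Matrix ι ι 𝕜)) μ = ⊤ := by
  simpa only [maxGenEigenspace_eq_eigenspace_of_genEigenspace_two_le
    (h.genEigenspace_two_le_eigenspace _)] using
    iSup_maxGenEigenspace_eq_top (toLin' (a : Matrix ι ι 𝕜))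

end GeneralLinearGroup

noncomputable def torusDiagonal (ι : Type*) [Fintype ι] [DecidableEq ι] :
    (ι → Circle) →* GL ι ℂ :=
  (Units.map ((diagonalRingHom ι ℂ : (ι → ℂ) →* Matrix ι ι ℂ).comp
    (Circle.coeHom.compLeft ι))).comp toUnits.toMonoidHom

lemma continuous_torusDiagonal {ι : Type*} [Fintype ι] [DecidableEq ι] :
    Continuous (torusDiagonal ι) :=
  (Continuous.units_map _ (continuous_pi fun i ↦
    continuous_subtype_val.comp (continuous_apply i)).matrix_diagonal).comp
    toUnits_homeomorph.continuous

/-- `a ∈ GL(n, ℂ)` is periodic if and only if `a` is diagonalizable with every eigenvalue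
of absolute value `1`, i.e. `a = P D P⁻¹` for some `P ∈ GL(n, ℂ)` and diagonal `D` with
`|D i i| = 1` for all `i`. -/
theorem GL_isPeriodic_iff_diagonalizable_unimodular
    {n : ℕ} (a : GL (Fin n) ℂ) :
    IsPeriodic a ↔
      ∃ (P : GL (Fin n) ℂ) (d : Fin n → ℂ), (∀ i, ‖d i‖ = 1) ∧
        (a : Matrix (Fin n) (Fin n) ℂ) = P * Matrix.diagonal d * (↑(P⁻¹) : Matrix (Fin n) (Fin n) ℂ) := by
  constructor
  · intro h
    obtain ⟨P, d, hd, ha⟩ :=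
      exists_eq_mul_diagonal_mul_inv_of_iSup_eigenspace_eq_top h.iSup_eigenspace_eq_top
    exact ⟨P, d, fun i ↦ h.norm_eq_one_of_hasEigenvalue (hd i), ha⟩
  · rintro ⟨P, d, hd, ha⟩
    let z : Fin n → Circle := fun i ↦ ⟨d i, mem_sphere_zero_iff_norm.2 (hd i)⟩
    let φ := (MulAut.conj P).toMonoidHom.comp (torusDiagonal (Fin n))
    have hφ : Continuous φ := (continuous_const.mul continuous_torusDiagonal).mul continuous_const
    have hz : a = φ z := Units.ext ha
    exact hz ▸ (isPeriodic_of_compactSpace z).map hφ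
end

section
/- Let G be a second countable locally compact Hausdorff group equipped with a right Haar measure, and suppose G admits a terminal pair (A, B) with respect to a ∈ G. Then there exists a bounded continuous function w : G → ℝ with values in [1/2, 2], with w ≡ 1/2 on A and w ≡ 2 on B, such that for every p ∈ [1, ∞) the weighted translation T = T_{a,w} on L^p(G) is invertible with inverse S = T_{a^{-1}, w'}, where w'(x) = 1/w(xa), and for every bounded compactly supported measurable function φ on G both series Σ_{n≥0} ‖T^n φ‖_p and Σ_{n≥0} ‖S^n φ‖_p converge (so Σ T^n φ and Σ S^n φ converge unconditionally in L^p(G)), and T S φ = φ. -/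
/-!
Urysohn's lemma gives a continuous `w` with values in `[1/2, 2]`, equal to `1/2` on `A` and to `2`
on `B`. If `φ` vanishes off the compact set `K`, then `T^n φ` vanishes off `K a^n`, which lies in
`A` for large `n`; there `w = 1/2`, so each further application of `T` at least halves the norm
and `‖T^n φ‖` decays geometrically. Symmetrically, `S^n φ` vanishes off `K a^{-n}`, and the weight
`1 / w(x a)` of `S` equals `1/2` on `K a^{-n}` once `K a^{1-n} ⊆ B`.
-/

open MeasureTheory Filter
open scoped ENNReal

section WeightedTranslation

variable {G 𝕜 E : Type*} [Group G] [MeasurableSpace G] [MeasurableMul G]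
  (μ : Measure G) [μ.IsMulRightInvariant]
  [NontriviallyNormedField 𝕜] [NormedAddCommGroup E] [NormedSpace 𝕜 E]
  {p : ℝ≥0∞} [Fact (1 ≤ p)]

/-- The paper's `T_{a,w}` is `weightedTranslation μ w _ a⁻¹`. -/
noncomputable def weightedTranslation (v : G → 𝕜) (hv : MemLp v ∞ μ) (b : G) :
    Lp E p μ →L[𝕜] Lp E p μ :=
  (ContinuousLinearMap.lsmul 𝕜 𝕜).holderL μ ∞ p p (hv.toLp v) ∘L
    (Lp.compMeasurePreservingₗᵢ 𝕜 (· * b) (measurePreserving_mul_right μ b)).toContinuousLinearMap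

variable {μ} {v : G → 𝕜} {hv : MemLp v ∞ μ} {b : G} {D : Set G} {f : Lp E p μ}

theorem ae_comp_mul_right (b : G) {q : G → Prop} (h : ∀ᵐ x ∂μ, q x) : ∀ᵐ x ∂μ, q (x * b) :=
  (measurePreserving_mul_right μ b).quasiMeasurePreserving.ae h

theorem weightedTranslation_ae_eq (f : Lp E p μ) :
    weightedTranslation μ v hv b f =ᵐ[μ] fun x => v x • f (x * b) := by
  have hb := measurePreserving_mul_right μ b
  filter_upwards [(ContinuousLinearMap.lsmul 𝕜 𝕜).coeFn_holder (r := p) (hv.toLp v)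
      (Lp.compMeasurePreserving (· * b) hb f), hv.coeFn_toLp,
    Lp.coeFn_compMeasurePreserving f hb] with x hvf hv hf
  refine hvf.trans ?_
  rw [hv, hf]
  rfl

theorem leftInverse_weightedTranslation {u : G → 𝕜} {hu : MemLp u ∞ μ} {c : G}
    (hbc : b * c = 1) (hvu : ∀ᵐ x ∂μ, v x * u (x * b) = 1) :
    Function.LeftInverse (weightedTranslation (E := E) (p := p) μ v hv b)
      (weightedTranslation μ u hu c) := by
  intro f
  refine Lp.ext ?_
  filter_upwards [weightedTranslation_ae_eq (hv := hv) (weightedTranslation μ u hu c f),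
    ae_comp_mul_right b (weightedTranslation_ae_eq (hv := hu) f), hvu] with x hT hU hvu
  rw [hT, hU, smul_smul, hvu, mul_assoc, hbc, mul_one, one_smul]

theorem weightedTranslation_ae_eq_zero (hf : ∀ᵐ x ∂μ, x ∉ D → f x = 0) :
    ∀ᵐ x ∂μ, x * b ∉ D → weightedTranslation μ v hv b f x = 0 := by
  filter_upwards [weightedTranslation_ae_eq (hv := hv) f, ae_comp_mul_right b hf] with x hT hf hx
  rw [hT, hf hx, smul_zero]

theorem norm_weightedTranslation_le {c : ℝ} (hf : ∀ᵐ x ∂μ, x ∉ D → f x = 0)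
    (hvc : ∀ᵐ x ∂μ, x * b ∈ D → ‖v x‖ ≤ c) :
    ‖weightedTranslation μ v hv b f‖ ≤ c * ‖f‖ := by
  have hb := measurePreserving_mul_right μ b
  rw [← Lp.norm_compMeasurePreserving f hb]
  refine Lp.norm_le_mul_norm_of_ae_le_mul ?_
  filter_upwards [weightedTranslation_ae_eq (hv := hv) f, Lp.coeFn_compMeasurePreserving f hb,
    ae_comp_mul_right b hf, hvc] with x hT hfb hf hvc
  rw [hT, hfb, norm_smul, Function.comp_apply]
  by_cases hx : x * b ∈ D
  · exact mul_le_mul_of_nonneg_right (hvc hx) (norm_nonneg _)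
  · rw [hf hx, norm_zero, mul_zero, mul_zero]

theorem weightedTranslation_pow_ae_eq_zero (hf : ∀ᵐ x ∂μ, x ∉ D → f x = 0) (n : ℕ) :
    ∀ᵐ x ∂μ, x * b ^ n ∉ D → (weightedTranslation μ v hv b ^ n) f x = 0 := by
  induction n with
  | zero => simpa using hf
  | succ n ih =>
    simpa only [pow_succ', mul_apply_eq_comp, Set.mem_ofPred_eq, mul_assoc] using
      weightedTranslation_ae_eq_zero (D := {x | x * b ^ n ∈ D}) (hv := hv) (b := b) ih

theorem norm_weightedTranslation_pow_succ_le {c : ℝ} (hf : ∀ᵐ x ∂μ, x ∉ D → f x = 0) {n : ℕ}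
    (hvc : ∀ᵐ x ∂μ, x * b ^ (n + 1) ∈ D → ‖v x‖ ≤ c) :
    ‖(weightedTranslation μ v hv b ^ (n + 1)) f‖ ≤ c * ‖(weightedTranslation μ v hv b ^ n) f‖ := by
  rw [pow_succ']
  exact norm_weightedTranslation_le (weightedTranslation_pow_ae_eq_zero hf n)
    (D := {x | x * b ^ n ∈ D}) (by simpa only [pow_succ', Set.mem_ofPred_eq, mul_assoc] using hvc)

theorem summable_norm_weightedTranslation_pow {c : ℝ} (hc : c < 1)
    (hf : ∀ᵐ x ∂μ, x ∉ D → f x = 0)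
    (hvc : ∀ᶠ n in atTop, ∀ᵐ x ∂μ, x * b ^ (n + 1) ∈ D → ‖v x‖ ≤ c) :
    Summable fun n => ‖(weightedTranslation μ v hv b ^ n) f‖ :=
  summable_of_ratio_norm_eventually_le hc <| hvc.mono fun _ hn => by
    simpa only [norm_norm] using norm_weightedTranslation_pow_succ_le hf hn

end WeightedTranslation

namespace IsTerminalPair

variable {G : Type*} [Group G] [TopologicalSpace G] {a : G} {A B K : Set G}

theorem eventually_mem_left (h : IsTerminalPair a A B) (hK : IsCompact K) :
    ∀ᶠ n in atTop, ∀ x, x * a⁻¹ ^ (n + 1) ∈ K → x ∈ A := by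
  obtain ⟨N, hN⟩ := h.2.2.2 K hK
  filter_upwards [eventually_ge_atTop N] with n hn x hx
  simpa [inv_pow] using (hN (n + 1) (by omega) _ hx).1

theorem eventually_mul_mem_right (h : IsTerminalPair a A B) (hK : IsCompact K) :
    ∀ᶠ n in atTop, ∀ x, x * a ^ (n + 1) ∈ K → x * a ∈ B := by
  obtain ⟨N, hN⟩ := h.2.2.2 K hK
  filter_upwards [eventually_ge_atTop N] with n hn x hx
  simpa [pow_succ', mul_assoc] using (hN n hn _ hx).2

end IsTerminalPair

theorem terminalPair_exists_weight_satisfying_FHC_general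
    {G : Type*} [Group G] [TopologicalSpace G] [IsTopologicalGroup G]
    [SecondCountableTopology G]
    [MeasurableSpace G] [BorelSpace G]
    (μ : Measure G) [μ.IsMulRightInvariant]
    (a : G) (A B : Set G) (hAB : IsTerminalPair a A B) :
    ∃ w : G → ℝ, Continuous w ∧ (∀ x, w x ∈ Set.Icc (1/2 : ℝ) 2) ∧
      (∀ x ∈ A, w x = 1/2) ∧ (∀ x ∈ B, w x = 2) ∧
      ∀ (p : ℝ≥0∞) [Fact (1 ≤ p)], p ≠ ∞ →
        ∃ T S : Lp ℂ p μ →L[ℂ] Lp ℂ p μ,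
          (∀ f : Lp ℂ p μ, T f =ᵐ[μ] fun x => (w x : ℂ) * f (x * a⁻¹)) ∧
          (∀ f : Lp ℂ p μ, S f =ᵐ[μ] fun x => ((w (x * a) : ℂ))⁻¹ * f (x * a)) ∧
          (∀ f : Lp ℂ p μ, T (S f) = f) ∧ (∀ f : Lp ℂ p μ, S (T f) = f) ∧
          ∀ φ : Lp ℂ p μ,
            (∃ C : ℝ, ∀ᵐ x ∂μ, ‖φ x‖ ≤ C) →
            (∃ K : Set G, IsCompact K ∧ ∀ᵐ x ∂μ, x ∉ K → φ x = 0) →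
            Summable (fun n : ℕ => ‖(T ^ n) φ‖) ∧
            Summable (fun n : ℕ => ‖(S ^ n) φ‖) ∧
            T (S φ) = φ := by
  obtain ⟨w, hwA, hwB, hw⟩ :=
    exists_bounded_mem_Icc_of_closed_of_le hAB.1 hAB.2.1 hAB.2.2.1 (by norm_num : (1/2 : ℝ) ≤ 2)
  refine ⟨w, w.continuous, hw, fun x hx => hwA hx, fun x hx => hwB hx, fun p _ _ => ?_⟩
  have hw_pos (x : G) : 0 < w x := by linarith [(hw x).1]
  have hw_ne (x : G) : (w x : ℂ) ≠ 0 := Complex.ofReal_ne_zero.2 (hw_pos x).ne'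
  have hT : MemLp (fun x => (w x : ℂ)) ∞ μ :=
    memLp_top_of_bound (by fun_prop) 2 <| .of_forall fun x => by
      rw [Complex.norm_real, Real.norm_of_nonneg (hw_pos x).le]
      exact (hw x).2
  have hS : MemLp (fun x => ((w (x * a) : ℂ))⁻¹) ∞ μ :=
    memLp_top_of_bound (by fun_prop) 2 <| .of_forall fun x => by
      rw [norm_inv, Complex.norm_real, Real.norm_of_nonneg (hw_pos _).le]
      exact inv_le_of_inv_le₀ (by norm_num) (by linarith [(hw (x * a)).1])
  set T := weightedTranslation (E := ℂ) (p := p) μ _ hT a⁻¹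
  set S := weightedTranslation (E := ℂ) (p := p) μ _ hS a
  have hTS : Function.LeftInverse T S :=
    leftInverse_weightedTranslation (inv_mul_cancel a) (.of_forall fun x => by simp [hw_ne])
  have hST : Function.LeftInverse S T :=
    leftInverse_weightedTranslation (mul_inv_cancel a) (.of_forall fun x => by simp [hw_ne])
  refine ⟨T, S, fun f => weightedTranslation_ae_eq f, fun f => weightedTranslation_ae_eq f,
    hTS, hST, ?_⟩
  rintro φ - ⟨K, hK, hφ⟩
  refine ⟨summable_norm_weightedTranslation_pow (c := 1/2) (by norm_num) hφ ?_,
    summable_norm_weightedTranslation_pow (c := 1/2) (by norm_num) hφ ?_, hTS φ⟩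
  · filter_upwards [hAB.eventually_mem_left hK] with n hn
    exact .of_forall fun x hx => by simp [hwA (hn x hx)]
  · filter_upwards [hAB.eventually_mul_mem_right hK] with n hn
    exact .of_forall fun x hx => by simp [hwB (hn x hx)]

/-- If a second countable locally compact Hausdorff group `G` with right Haar measure `μ`
admits a terminal pair `(A, B)` with respect to `a`, then there is a continuous weight
`w : G → [1/2, 2]` with `w ≡ 1/2` on `A` and `w ≡ 2` on `B`, such that for every
`p ∈ [1, ∞)` the weighted translation `T = T_{a,w}` on `L^p(G)` is invertible with
inverse `S = T_{a⁻¹, w'}` where `w'(x) = 1 / w(xa)`, and for every bounded compactly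
supported `φ` the series `Σ ‖T^n φ‖` and `Σ ‖S^n φ‖` converge (so `Σ T^n φ` and
`Σ S^n φ` converge unconditionally) and `T (S φ) = φ`. -/
theorem terminalPair_exists_weight_satisfying_FHC
    {G : Type*} [Group G] [TopologicalSpace G] [IsTopologicalGroup G]
    [LocallyCompactSpace G] [T2Space G] [SecondCountableTopology G]
    [MeasurableSpace G] [BorelSpace G]
    (μ : Measure G) [μ.Regular] [μ.IsMulRightInvariant] [μ.IsOpenPosMeasure]
    (a : G) (A B : Set G) (hAB : IsTerminalPair a A B) :
    ∃ w : G → ℝ, Continuous w ∧ (∀ x, w x ∈ Set.Icc (1/2 : ℝ) 2) ∧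
      (∀ x ∈ A, w x = 1/2) ∧ (∀ x ∈ B, w x = 2) ∧
      ∀ (p : ℝ≥0∞) [Fact (1 ≤ p)], p ≠ ∞ →
        ∃ T S : Lp ℂ p μ →L[ℂ] Lp ℂ p μ,
          (∀ f : Lp ℂ p μ, T f =ᵐ[μ] fun x => (w x : ℂ) * f (x * a⁻¹)) ∧
          (∀ f : Lp ℂ p μ, S f =ᵐ[μ] fun x => ((w (x * a) : ℂ))⁻¹ * f (x * a)) ∧
          (∀ f : Lp ℂ p μ, T (S f) = f) ∧ (∀ f : Lp ℂ p μ, S (T f) = f) ∧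
          ∀ φ : Lp ℂ p μ,
            (∃ C : ℝ, ∀ᵐ x ∂μ, ‖φ x‖ ≤ C) →
            (∃ K : Set G, IsCompact K ∧ ∀ᵐ x ∂μ, x ∉ K → φ x = 0) →
            Summable (fun n : ℕ => ‖(T ^ n) φ‖) ∧
            Summable (fun n : ℕ => ‖(S ^ n) φ‖) ∧
            T (S φ) = φ :=
  terminalPair_exists_weight_satisfying_FHC_general μ a A B hAB
end

section
/- Let G be a second countable locally compact Hausdorff group equipped with a right Haar measure and let a ∈ G be an aperiodic element. Then for every p ∈ [1, ∞) there exists a bounded continuous function w : G → (0, ∞) such that the weighted translation T_{a,w} is hypercyclic on L^p(G): there exists f ∈ L^p(G) whose orbit {T_{a,w}^n f : n ∈ ℕ} is dense in L^p(G). -/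
/-!
Aperiodicity of `a` yields exponents `φ k` with `a ^ φ k` leaving every compact set. Take a
continuous proper function `h` that changes by at most `1` under right translation by `a`
(an infimal convolution of any proper function along the `a`-orbit) and the weight
`w = exp (h (· a⁻¹) - h)`. Being a coboundary, `w` makes `Tⁿ` and its inverse act as
`f ↦ exp (h (· a^∓n) - h) f (· a^∓n)`, so on functions supported in a compact set `K`, where `h` is
bounded, their norms are controlled by `sup_K exp (h - h (· a^±n))`, which tends to `0` along `φ`.
The hypercyclicity criterion, via Baire's theorem in the separable space `Lᵖ`, then gives a dense
orbit.
-/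

open MeasureTheory Filter Topology Set
open scoped ENNReal Pointwise

theorem exists_denseRange_of_forall_exists_preimage_inter {X ι : Type*} [TopologicalSpace X]
    [BaireSpace X] [SecondCountableTopology X] [Nonempty X] {f : ι → X → X}
    (hf : ∀ i, Continuous (f i))
    (h : ∀ U V : Set X, IsOpen U → U.Nonempty → IsOpen V → V.Nonempty →
      ∃ i, (U ∩ f i ⁻¹' V).Nonempty) :
    ∃ x, DenseRange fun i => f i x := by
  obtain ⟨B, hBc, hBne, hB⟩ := TopologicalSpace.exists_countable_basis X
  have hdense : Dense (⋂ V ∈ B, ⋃ i, f i ⁻¹' V) := by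
    refine dense_biInter_of_isOpen
      (fun V hV => isOpen_iUnion fun i => (hB.isOpen hV).preimage (hf i)) hBc fun V hV => ?_
    refine dense_iff_inter_open.2 fun U hU hUne => ?_
    obtain ⟨i, x, hxU, hxV⟩ :=
      h U V hU hUne (hB.isOpen hV) (nonempty_iff_ne_empty.2 fun hV0 => hBne (hV0 ▸ hV))
    exact ⟨x, hxU, mem_iUnion.2 ⟨i, hxV⟩⟩
  obtain ⟨x, hx⟩ := hdense.nonempty
  refine ⟨x, dense_iff_inter_open.2 fun W hW ⟨w, hw⟩ => ?_⟩
  obtain ⟨V, hVB, -, hVW⟩ := hB.exists_subset_of_mem_open hw hW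
  obtain ⟨i, hi⟩ := mem_iUnion.1 (mem_iInter₂.1 hx V hVB)
  exact ⟨f i x, hVW hi, i, rfl⟩

theorem ContinuousLinearMap.exists_denseRange_pow_apply_of_tendsto_zero {R E : Type*}
    [Semiring R] [AddCommMonoid E] [TopologicalSpace E] [ContinuousAdd E] [Module R E]
    [BaireSpace E] [SecondCountableTopology E] (T : E →L[R] E) {D : Set E} (hD : Dense D)
    (φ : ℕ → ℕ) (S : ℕ → E → E) (hTS : ∀ k, ∀ y ∈ D, (T ^ φ k) (S k y) = y)
    (hT : ∀ x ∈ D, Tendsto (fun k => (T ^ φ k) x) atTop (𝓝 0))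
    (hS : ∀ y ∈ D, Tendsto (fun k => S k y) atTop (𝓝 0)) :
    ∃ x, DenseRange fun n : ℕ => (T ^ n) x := by
  refine exists_denseRange_of_forall_exists_preimage_inter (fun n => (T ^ n).continuous)
    fun U V hU hUne hV hVne => ?_
  obtain ⟨x, hxU, hxD⟩ := hD.inter_open_nonempty U hU hUne
  obtain ⟨y, hyV, hyD⟩ := hD.inter_open_nonempty V hV hVne
  have hnear : Tendsto (fun k => x + S k y) atTop (𝓝 x) := by
    simpa using tendsto_const_nhds.add (hS y hyD)
  have hfar : Tendsto (fun k => (T ^ φ k) (x + S k y)) atTop (𝓝 y) := by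
    simpa [map_add, hTS _ y hyD] using (hT x hxD).add (tendsto_const_nhds (x := y))
  obtain ⟨k, hkU, hkV⟩ :=
    ((hnear.eventually (hU.mem_nhds hxU)).and (hfar.eventually (hV.mem_nhds hyV))).exists
  exact ⟨φ k, x + S k y, hkU, hkV⟩

section TopologicalGroup

variable {G : Type*} [Group G] [TopologicalSpace G] [IsTopologicalGroup G]

theorem isCompact_closure_zpowers_of_eventually_pow_mem {a : G} {K : Set G} (hK : IsCompact K)
    (h : ∀ᶠ n : ℕ in atTop, a ^ n ∈ K) : IsCompact (closure (Subgroup.zpowers a : Set G)) := by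
  obtain ⟨N, hN⟩ := eventually_atTop.1 h
  refine (hK.mul hK.inv).closure_of_subset ?_
  rintro _ ⟨m, rfl⟩
  -- `aᵐ = a ^ (k + m) * (a ^ k)⁻¹` with both exponents at least `N`
  set k := N + m.natAbs
  have hkm : ((k + m).toNat : ℤ) = k + m := Int.toNat_of_nonneg (by omega)
  refine ⟨a ^ (k + m).toNat, hN _ (by omega), (a ^ k)⁻¹, inv_mem_inv.2 (hN k (by omega)), ?_⟩
  dsimp only
  rw [← zpow_natCast, ← zpow_natCast, hkm, ← zpow_neg, ← zpow_add]
  simp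

theorem IsAperiodic.exists_tendsto_pow_cocompact [WeaklyLocallyCompactSpace G]
    [SigmaCompactSpace G] {a : G} (ha : IsAperiodic a) :
    ∃ φ : ℕ → ℕ, Tendsto (fun k => a ^ φ k) atTop (cocompact G) := by
  let E := CompactExhaustion.choice G
  have hfreq : ∀ n, ∃ᶠ k in atTop, a ^ k ∉ E n := fun n =>
    not_eventually.1 fun h =>
      ha (isCompact_closure_zpowers_of_eventually_pow_mem (E.isCompact n) h)
  obtain ⟨φ, -, hφ⟩ := extraction_forall_of_frequently hfreq
  refine ⟨φ, hasBasis_cocompact.tendsto_right_iff.2 fun K hK => ?_⟩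
  obtain ⟨n, hn⟩ := E.exists_superset_of_isCompact hK
  filter_upwards [eventually_ge_atTop n] with k hk hmem
  exact hφ k (E.subset hk (hn hmem))

theorem tendsto_inv_cocompact : Tendsto (·⁻¹ : G → G) (cocompact G) (cocompact G) :=
  (Homeomorph.inv G).map_cocompact.le

theorem eventually_forall_le_apply_mul {h : G → ℝ} (hh : Tendsto h (cocompact G) atTop)
    {ι : Type*} {l : Filter ι} {c : ι → G} (hc : Tendsto c l (cocompact G)) {K : Set G}
    (hK : IsCompact K) (M : ℝ) : ∀ᶠ i in l, ∀ y ∈ K, M ≤ h (y * c i) := by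
  obtain ⟨L, hL, hLM⟩ := mem_cocompact.1 (hh.eventually (eventually_ge_atTop M))
  filter_upwards [hc.eventually (hK.inv.mul hL).compl_mem_cocompact] with i hi y hy
  by_contra hlt
  have hyL : y * c i ∈ L := by_contra fun hyL => hlt (hLM hyL)
  exact hi ⟨y⁻¹, inv_mem_inv.2 hy, y * c i, hyL, by simp⟩

end TopologicalGroup

theorem exists_continuous_nonneg_tendsto_cocompact {X : Type*} [TopologicalSpace X]
    [RegularSpace X] [LocallyCompactSpace X] [SigmaCompactSpace X] :
    ∃ f : X → ℝ, Continuous f ∧ (∀ x, 0 ≤ f x) ∧ Tendsto f (cocompact X) atTop := by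
  let E := CompactExhaustion.choice X
  choose u hu0 hu1 hu01 using fun n => exists_continuous_zero_one_of_isCompact (E.isCompact n)
    isOpen_interior.isClosed_compl (disjoint_compl_right_iff_subset.2 (E.subset_interior_succ n))
  have hsum : ∀ x m, x ∈ E m → HasSum (fun n => u n x) (∑ n ∈ Finset.range m, u n x) :=
    fun x m hx => hasSum_sum_of_ne_finset_zero fun n hn =>
      hu0 n (E.subset (by simpa using hn) hx)
  refine ⟨fun x => ∑' n, u n x, ?_, fun x => tsum_nonneg fun n => (hu01 n x).1, ?_⟩
  · refine continuous_iff_continuousAt.2 fun x => ?_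
    have hnhds : E (E.find x + 1) ∈ 𝓝 x :=
      mem_interior_iff_mem_nhds.1 (E.subset_interior_succ _ (E.mem_find x))
    exact ((continuous_finsetSum _ fun n _ => (u n).continuous).continuousAt).congr
      (eventually_of_mem hnhds fun y hy => (hsum y _ hy).tsum_eq.symm)
  · refine tendsto_atTop.2 fun M => hasBasis_cocompact.eventually_iff.2 ?_
    obtain ⟨m, hm⟩ := exists_nat_ge M
    refine ⟨E m, E.isCompact m, fun x hx => ?_⟩
    have hone : ∀ n ∈ Finset.range m, u n x = 1 := fun n hn =>
      hu1 n fun hx' => hx (E.subset (by simpa using hn) (interior_subset hx'))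
    calc M ≤ ∑ n ∈ Finset.range m, u n x := by simpa [Finset.sum_congr rfl hone] using hm
      _ ≤ ∑' n, u n x :=
        Summable.sum_le_tsum _ (fun n _ => (hu01 n x).1) (hsum x _ (E.mem_find x)).summable

theorem natCast_lt_abs_of_notMem_Icc {m : ℕ} {n : ℤ} (hn : n ∉ Finset.Icc (-m : ℤ) m) :
    (m : ℝ) < |(n : ℝ)| := by
  have hmn : (m : ℤ) < |n| := by rw [Finset.mem_Icc] at hn; rw [lt_abs]; omega
  exact_mod_cast hmn

section OrbitInf

variable {G : Type*} [Group G]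

noncomputable def orbitInf (h₀ : G → ℝ) (a x : G) : ℝ :=
  ⨅ n : ℤ, h₀ (x * a ^ n) + |(n : ℝ)|

variable {h₀ : G → ℝ} {a : G}

theorem orbitInf_le (hnonneg : ∀ x, 0 ≤ h₀ x) (x : G) (n : ℤ) :
    orbitInf h₀ a x ≤ h₀ (x * a ^ n) + |(n : ℝ)| :=
  ciInf_le ⟨0, by rintro _ ⟨n, rfl⟩; exact add_nonneg (hnonneg _) (abs_nonneg _)⟩ n

theorem le_orbitInf {x : G} {c : ℝ} (h : ∀ n : ℤ, c ≤ h₀ (x * a ^ n) + |(n : ℝ)|) :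
    c ≤ orbitInf h₀ a x :=
  le_ciInf h

theorem orbitInf_mul_zpow_le (hnonneg : ∀ x, 0 ≤ h₀ x) (x : G) (m : ℤ) :
    orbitInf h₀ a (x * a ^ m) ≤ orbitInf h₀ a x + |(m : ℝ)| := by
  refine sub_le_iff_le_add.1 (le_orbitInf fun n => ?_)
  have h := orbitInf_le (a := a) hnonneg (x * a ^ m) (n - m)
  rw [mul_assoc, ← zpow_add, add_sub_cancel] at h
  have habs := abs_sub (n : ℝ) m
  push_cast at h
  linarith

variable [TopologicalSpace G] [IsTopologicalGroup G]

theorem continuous_orbitInf (hcont : Continuous h₀) (hnonneg : ∀ x, 0 ≤ h₀ x) :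
    Continuous (orbitInf h₀ a) := by
  refine continuous_iff_continuousAt.2 fun x₀ => ?_
  obtain ⟨m, hm⟩ := exists_nat_gt (h₀ x₀ + 1)
  have hF : (Finset.Icc (-m : ℤ) m).Nonempty := ⟨0, by simp⟩
  -- near `x₀` only the exponents `|n| ≤ m` can compete with `n = 0`
  have hloc : ∀ y, h₀ y < h₀ x₀ + 1 →
      (Finset.Icc (-m : ℤ) m).inf' hF (fun n => h₀ (y * a ^ n) + |(n : ℝ)|) =
        orbitInf h₀ a y := by
    intro y hy
    obtain ⟨n₀, -, hn₀⟩ :=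
      (Finset.Icc (-m : ℤ) m).exists_mem_eq_inf' hF fun n => h₀ (y * a ^ n) + |(n : ℝ)|
    refine le_antisymm (le_orbitInf fun n => ?_) (hn₀ ▸ orbitInf_le hnonneg y n₀)
    by_cases hn : n ∈ Finset.Icc (-m : ℤ) m
    · exact Finset.inf'_le _ hn
    · have hmn := natCast_lt_abs_of_notMem_Icc hn
      refine (Finset.inf'_le _ (by simp : (0 : ℤ) ∈ Finset.Icc (-m : ℤ) m)).trans ?_
      simp only [zpow_zero, mul_one, Int.cast_zero, abs_zero, add_zero]
      linarith [hnonneg (y * a ^ n)]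
  refine (ContinuousAt.finset_inf'_apply (f := fun (n : ℤ) y => h₀ (y * a ^ n) + |(n : ℝ)|)
    hF fun n _ => by fun_prop).congr ?_
  filter_upwards [hcont.continuousAt.eventually (gt_mem_nhds (lt_add_one (h₀ x₀)))] with y hy
  exact hloc y hy

theorem tendsto_orbitInf (hnonneg : ∀ x, 0 ≤ h₀ x) (htends : Tendsto h₀ (cocompact G) atTop) :
    Tendsto (orbitInf h₀ a) (cocompact G) atTop := by
  refine tendsto_atTop.2 fun M => ?_
  obtain ⟨L, hL, hLM⟩ := mem_cocompact.1 (htends.eventually (eventually_ge_atTop M))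
  obtain ⟨m, hm⟩ := exists_nat_ge M
  refine mem_cocompact.2 ⟨⋃ n ∈ Finset.Icc (-m : ℤ) m, (· * a ^ (-n)) '' L,
    Finset.isCompact_biUnion _ fun n _ => hL.image (continuous_mul_const _),
    fun y hy => le_orbitInf fun n => ?_⟩
  by_cases hn : n ∈ Finset.Icc (-m : ℤ) m
  · have hyL : y * a ^ n ∉ L := fun hyL =>
      hy (mem_biUnion hn ⟨y * a ^ n, hyL, by simp [mul_assoc]⟩)
    have hMy : M ≤ h₀ (y * a ^ n) := hLM hyL
    linarith [abs_nonneg (n : ℝ)]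
  · linarith [natCast_lt_abs_of_notMem_Icc hn, hnonneg (y * a ^ n)]

theorem exists_continuous_tendsto_cocompact_mul_zpow_le [LocallyCompactSpace G]
    [SigmaCompactSpace G] (a : G) :
    ∃ h : G → ℝ, Continuous h ∧ Tendsto h (cocompact G) atTop ∧
      ∀ x (m : ℤ), h (x * a ^ m) ≤ h x + |(m : ℝ)| := by
  obtain ⟨h₀, hcont, hnonneg, htends⟩ := exists_continuous_nonneg_tendsto_cocompact (X := G)
  exact ⟨orbitInf h₀ a, continuous_orbitInf hcont hnonneg, tendsto_orbitInf hnonneg htends,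
    orbitInf_mul_zpow_le hnonneg⟩

end OrbitInf

namespace MeasureTheory.Lp

theorem dense_setOf_ae_eq_zero_compl_isCompact {α E : Type*} [TopologicalSpace α]
    [NormalSpace α] [R1Space α] [WeaklyLocallyCompactSpace α] [MeasurableSpace α] [BorelSpace α]
    [NormedAddCommGroup E] [NormedSpace ℝ E] {μ : Measure α} [μ.Regular] {p : ℝ≥0∞}
    [Fact (1 ≤ p)] (hp : p ≠ ∞) :
    Dense {f : Lp E p μ | ∃ K, IsCompact K ∧ ∀ᵐ x ∂μ, x ∉ K → f x = 0} := by
  refine Metric.dense_iff.2 fun u r hr => ?_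
  obtain ⟨g, hgK, hug, -, hg⟩ := (Lp.memLp u).exists_hasCompactSupport_eLpNorm_sub_le hp
    (ε := ENNReal.ofReal (r / 2)) (by simpa using hr)
  refine ⟨hg.toLp g, ?_, tsupport g, hgK, ?_⟩
  · rw [Metric.mem_ball, dist_comm, Lp.dist_def,
      eLpNorm_congr_ae (EventuallyEq.rfl.sub hg.coeFn_toLp)]
    calc (eLpNorm (⇑u - g) p μ).toReal ≤ r / 2 :=
          ENNReal.toReal_le_of_le_ofReal (by positivity) hug
      _ < r := half_lt_self hr
  · filter_upwards [hg.coeFn_toLp] with x hx hxK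
    rw [hx, image_eq_zero_of_notMem_tsupport hxK]

variable {G : Type*} [Group G] [MeasurableSpace G] [MeasurableMul G] {μ : Measure G}
  [μ.IsMulRightInvariant] {p : ℝ≥0∞} [Fact (1 ≤ p)]

variable (μ p) in
noncomputable def weightedTranslation (b : G) (w : Lp ℂ ∞ μ) : Lp ℂ p μ →L[ℂ] Lp ℂ p μ :=
  (ContinuousLinearMap.mul ℂ ℂ).holderL μ ∞ p p w ∘L
    (compMeasurePreservingₗᵢ ℂ (· * b⁻¹)
      (measurePreserving_mul_right μ b⁻¹)).toContinuousLinearMap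

theorem coeFn_weightedTranslation (b : G) (w : Lp ℂ ∞ μ) (f : Lp ℂ p μ) :
    weightedTranslation μ p b w f =ᵐ[μ] fun x => w x * f (x * b⁻¹) := by
  filter_upwards [(ContinuousLinearMap.mul ℂ ℂ).coeFn_holder (r := p) w
      (compMeasurePreserving _ (measurePreserving_mul_right μ b⁻¹) f),
    coeFn_compMeasurePreserving f (measurePreserving_mul_right μ b⁻¹)] with x hx hfx
  rw [weightedTranslation, ContinuousLinearMap.comp_apply]
  exact hx.trans (by rw [ContinuousLinearMap.mul_apply', hfx]; rfl)

end MeasureTheory.Lp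

section CoboundaryWeight

variable {G : Type*} [Group G] (h : G → ℝ)

/-- A multiplicative coboundary: weighted translations by these weights compose like the
translations themselves. -/
noncomputable def coboundaryWeight (b x : G) : ℂ :=
  (Real.exp (h (x * b⁻¹) - h x) : ℝ)

theorem coboundaryWeight_mul_coboundaryWeight (b c x : G) :
    coboundaryWeight h b x * coboundaryWeight h c (x * b⁻¹) = coboundaryWeight h (c * b) x := by
  simp only [coboundaryWeight, ← Complex.ofReal_mul, ← Real.exp_add, mul_inv_rev, mul_assoc]
  ring_nf

@[simp]
theorem coboundaryWeight_one (x : G) : coboundaryWeight h 1 x = 1 := by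
  simp [coboundaryWeight]

end CoboundaryWeight

section CoboundaryTranslation

open MeasureTheory.Lp

variable {G : Type*} [Group G] [TopologicalSpace G] [IsTopologicalGroup G] [MeasurableSpace G]
  [BorelSpace G] {μ : Measure G}

theorem memLp_top_coboundaryWeight {h : G → ℝ} (hh : Continuous h) {b : G} {C : ℝ}
    (hC : ∀ x, h (x * b⁻¹) ≤ h x + C) : MemLp (coboundaryWeight h b) ∞ μ := by
  have hcont : Continuous (coboundaryWeight h b) := by unfold coboundaryWeight; fun_prop
  refine memLp_top_of_bound hcont.aestronglyMeasurable (Real.exp C) (.of_forall fun x => ?_)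
  rw [coboundaryWeight, Complex.norm_real, Real.norm_eq_abs, Real.abs_exp]
  exact Real.exp_le_exp.2 (by linarith [hC x])

variable [μ.IsMulRightInvariant] {p : ℝ≥0∞} [Fact (1 ≤ p)] {h : G → ℝ}

variable (μ p h) in
noncomputable def coboundaryTranslation (b : G) (hw : MemLp (coboundaryWeight h b) ∞ μ) :
    Lp ℂ p μ →L[ℂ] Lp ℂ p μ :=
  weightedTranslation μ p b (hw.toLp _)

theorem coeFn_coboundaryTranslation {b : G} (hw : MemLp (coboundaryWeight h b) ∞ μ)
    (f : Lp ℂ p μ) :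
    coboundaryTranslation μ p h b hw f =ᵐ[μ] fun x => coboundaryWeight h b x * f (x * b⁻¹) := by
  filter_upwards [coeFn_weightedTranslation b (hw.toLp _) f, hw.coeFn_toLp] with x hx hwx
  rw [coboundaryTranslation, hx, hwx]

theorem coeFn_coboundaryTranslation_pow {b : G} (hw : MemLp (coboundaryWeight h b) ∞ μ) (n : ℕ)
    (f : Lp ℂ p μ) :
    (coboundaryTranslation μ p h b hw ^ n) f =ᵐ[μ]
      fun x => coboundaryWeight h (b ^ n) x * f (x * (b ^ n)⁻¹) := by
  induction n with
  | zero => exact .of_forall fun x => by simp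
  | succ n ih =>
    rw [pow_succ', mul_apply_eq_comp]
    filter_upwards [coeFn_coboundaryTranslation hw ((coboundaryTranslation μ p h b hw ^ n) f),
      (measurePreserving_mul_right μ b⁻¹).quasiMeasurePreserving.ae_eq_comp ih] with x h₁ h₂
    simp only [Function.comp_apply] at h₂
    rw [h₁, h₂, ← mul_assoc, coboundaryWeight_mul_coboundaryWeight, ← pow_succ, mul_assoc,
      ← mul_inv_rev, ← pow_succ]

theorem coboundaryTranslation_mul_inv {b : G} (hw : MemLp (coboundaryWeight h b) ∞ μ)
    (hw' : MemLp (coboundaryWeight h b⁻¹) ∞ μ) :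
    coboundaryTranslation μ p h b hw * coboundaryTranslation μ p h b⁻¹ hw' = 1 := by
  ext1 f
  refine Lp.ext ?_
  filter_upwards [coeFn_coboundaryTranslation hw (coboundaryTranslation μ p h b⁻¹ hw' f),
    (measurePreserving_mul_right μ b⁻¹).quasiMeasurePreserving.ae_eq_comp
      (coeFn_coboundaryTranslation hw' f)] with x h₁ h₂
  simp only [Function.comp_apply] at h₂
  rw [mul_apply_eq_comp, h₁, h₂, ← mul_assoc, coboundaryWeight_mul_coboundaryWeight]
  simp

theorem norm_coboundaryTranslation_pow_apply_le {b : G}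
    (hw : MemLp (coboundaryWeight h b) ∞ μ) (n : ℕ) (f : Lp ℂ p μ) {C : ℝ}
    (hC : ∀ᵐ x ∂μ, f x ≠ 0 → h x - h (x * b ^ n) ≤ C) :
    ‖(coboundaryTranslation μ p h b hw ^ n) f‖ ≤ Real.exp C * ‖f‖ := by
  have hτ := measurePreserving_mul_right μ (b ^ n)
  rw [← Lp.norm_compMeasurePreserving _ hτ]
  refine Lp.norm_le_mul_norm_of_ae_le_mul ?_
  filter_upwards
    [Lp.coeFn_compMeasurePreserving ((coboundaryTranslation μ p h b hw ^ n) f) hτ,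
    hτ.quasiMeasurePreserving.ae_eq_comp (coeFn_coboundaryTranslation_pow hw n f), hC]
    with x h₁ h₂ hx
  rw [h₁, h₂]
  by_cases hfx : f x = 0
  · simp [hfx]
  · simp only [Function.comp_apply, coboundaryWeight, mul_inv_cancel_right, norm_mul,
      Complex.norm_real, Real.norm_eq_abs, Real.abs_exp]
    gcongr
    exact hx hfx

theorem tendsto_coboundaryTranslation_pow_apply (hh : Continuous h)
    (htends : Tendsto h (cocompact G) atTop) {b : G} (hw : MemLp (coboundaryWeight h b) ∞ μ)
    {φ : ℕ → ℕ} (hφ : Tendsto (fun k => b ^ φ k) atTop (cocompact G)) {f : Lp ℂ p μ}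
    {K : Set G} (hK : IsCompact K) (hfK : ∀ᵐ x ∂μ, x ∉ K → f x = 0) :
    Tendsto (fun k => (coboundaryTranslation μ p h b hw ^ φ k) f) atTop (𝓝 0) := by
  obtain ⟨B, hB⟩ := hK.bddAbove_image hh.continuousOn
  have hbound : ∀ M, ∀ᶠ k in atTop,
      ‖(coboundaryTranslation μ p h b hw ^ φ k) f‖ ≤ Real.exp B * Real.exp (-M) * ‖f‖ := by
    intro M
    filter_upwards [eventually_forall_le_apply_mul htends hφ hK M] with k hk
    rw [← Real.exp_add, ← sub_eq_add_neg]
    refine norm_coboundaryTranslation_pow_apply_le hw _ f ?_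
    filter_upwards [hfK] with x hx hfx
    have hxK : x ∈ K := by_contra fun hxK => hfx (hx hxK)
    linarith [hB (mem_image_of_mem h hxK), hk x hxK]
  have hsmall : Tendsto (fun M => Real.exp B * Real.exp (-M) * ‖f‖) atTop (𝓝 0) := by
    simpa using (Real.tendsto_exp_neg_atTop_nhds_zero.const_mul (Real.exp B)).mul_const ‖f‖
  refine NormedAddGroup.tendsto_nhds_zero.2 fun ε hε => ?_
  obtain ⟨M, hM⟩ := (hsmall.eventually (gt_mem_nhds hε)).exists
  filter_upwards [hbound M] with k hk
  exact hk.trans_lt hM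

end CoboundaryTranslation

theorem exists_weight_weightedTranslation_hypercyclic_general
    {G : Type*} [Group G] [TopologicalSpace G] [IsTopologicalGroup G]
    [LocallyCompactSpace G] [SecondCountableTopology G]
    [MeasurableSpace G] [BorelSpace G]
    (μ : Measure G) [μ.Regular] [μ.IsMulRightInvariant]
    (a : G) (ha : IsAperiodic a) :
    ∀ (p : ℝ≥0∞) [Fact (1 ≤ p)], p ≠ ∞ →
      ∃ w : G → ℝ, Continuous w ∧ (∀ x, 0 < w x) ∧ (∃ C : ℝ, ∀ x, w x ≤ C) ∧
        ∃ T : Lp ℂ p μ →L[ℂ] Lp ℂ p μ,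
          (∀ f : Lp ℂ p μ, T f =ᵐ[μ] fun x => (w x : ℂ) * f (x * a⁻¹)) ∧
          ∃ f : Lp ℂ p μ, Dense (Set.range fun n : ℕ => (T ^ n) f) := by
  intro p _ hp
  have : Fact (p ≠ ∞) := ⟨hp⟩
  obtain ⟨φ, hφ⟩ := ha.exists_tendsto_pow_cocompact
  have hφ_inv : Tendsto (fun k => a⁻¹ ^ φ k) atTop (cocompact G) := by
    simpa [Function.comp_def, inv_pow] using tendsto_inv_cocompact.comp hφ
  obtain ⟨h, hh, htends, hstep⟩ := exists_continuous_tendsto_cocompact_mul_zpow_le a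
  have hstep_inv : ∀ x, h (x * a⁻¹) ≤ h x + 1 := fun x => by simpa using hstep x (-1)
  have hw := memLp_top_coboundaryWeight (μ := μ) hh hstep_inv
  have hw' := memLp_top_coboundaryWeight (μ := μ) hh (b := a⁻¹) fun x => by
    simpa using hstep x 1
  set T := coboundaryTranslation μ p h a hw
  set S := coboundaryTranslation μ p h a⁻¹ hw'
  have hTS : ∀ n, T ^ n * S ^ n = 1 := fun n =>
    pow_mul_pow_eq_one n (coboundaryTranslation_mul_inv hw hw')
  refine ⟨fun x => Real.exp (h (x * a⁻¹) - h x), by fun_prop, fun x => Real.exp_pos _,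
    ⟨Real.exp 1, fun x => Real.exp_le_exp.2 (by linarith [hstep_inv x])⟩,
    T, coeFn_coboundaryTranslation hw, ?_⟩
  exact T.exists_denseRange_pow_apply_of_tendsto_zero
    (Lp.dense_setOf_ae_eq_zero_compl_isCompact hp) φ (fun k => ⇑(S ^ φ k))
    (fun k y _ => DFunLike.congr_fun (hTS (φ k)) y)
    (fun f ⟨K, hK, hfK⟩ => tendsto_coboundaryTranslation_pow_apply hh htends hw hφ hK hfK)
    (fun f ⟨K, hK, hfK⟩ => tendsto_coboundaryTranslation_pow_apply hh htends hw' hφ_inv hK hfK)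

/-- If `a` is an aperiodic element of a second countable locally compact Hausdorff group
`G` with right Haar measure `μ`, then for every `p ∈ [1, ∞)` there is a bounded
continuous weight `w : G → (0, ∞)` such that the weighted translation
`T_{a,w} f = w · f(· a⁻¹)` is hypercyclic on `L^p(G)`: some `f` has dense orbit. -/
theorem exists_weight_weightedTranslation_hypercyclic
    {G : Type*} [Group G] [TopologicalSpace G] [IsTopologicalGroup G]
    [LocallyCompactSpace G] [T2Space G] [SecondCountableTopology G]
    [MeasurableSpace G] [BorelSpace G]
    (μ : Measure G) [μ.Regular] [μ.IsMulRightInvariant] [μ.IsOpenPosMeasure]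
    (a : G) (ha : IsAperiodic a) :
    ∀ (p : ℝ≥0∞) [Fact (1 ≤ p)], p ≠ ∞ →
      ∃ w : G → ℝ, Continuous w ∧ (∀ x, 0 < w x) ∧ (∃ C : ℝ, ∀ x, w x ≤ C) ∧
        ∃ T : Lp ℂ p μ →L[ℂ] Lp ℂ p μ,
          (∀ f : Lp ℂ p μ, T f =ᵐ[μ] fun x => (w x : ℂ) * f (x * a⁻¹)) ∧
          ∃ f : Lp ℂ p μ, Dense (Set.range fun n : ℕ => (T ^ n) f) :=
  exists_weight_weightedTranslation_hypercyclic_general μ a ha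
end
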